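/- arXiv:2301.09182 — 9 statements merged into one kernel-verified Lean document; each statement's English description precedes it below -/
import Mathlib

section
/- Let X and Y be finitely generated free ℤ-modules with a perfect ℤ-bilinear pairing ⟨·,·⟩ : X × Y → ℤ. Let Σ ⊂ X be a finite subset with a bijection α ↦ α∨ onto a finite subset Σ∨ ⊂ Y satisfying ⟨α, α∨⟩ = 2 for all α ∈ Σ, and suppose (X, Σ, Y, Σ∨) is a reduced root datum: for every α ∈ Σ the reflection s_α(x) = x − ⟨x, α∨⟩·α maps Σ to Σ, the reflection s_α(y) = y − ⟨α, y⟩·α∨ maps Σ∨ to Σ∨ (compatibly with the bijection), and α ∈ Σ, c ∈ ℝ, c·α ∈ Σ imply c = ±1. Let W be the Weyl group, the group of automorphisms of Y generated by the reflections s_α (α ∈ Σ). Let T ⊆ Σ be a subset with T = −T that is stable under W, and such that every α ∈ T lies in 2X. For α ∈ Σ define α′ := α/2 ∈ X and (α∨)′ := 2α∨ if α ∈ T, and α′ := α, (α∨)′ := α∨ otherwise. Then (X, Σ′, Y, (Σ′)∨), where Σ′ = {α′ : α ∈ Σ} and (Σ′)∨ = {(α∨)′ : α ∈ Σ} with the bijection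 α′ ↦ (α∨)′, is again a reduced root datum; for every α ∈ Σ the reflections attached to (α′, (α∨)′) coincide with s_α, so the Weyl group of the new datum equals W. Moreover, if Δ ⊆ Σ is a set of simple roots for a positive system Σ⁺ of Σ, then Δ′ := {α′ : α ∈ Δ} is a set of simple roots for the positive system {α′ : α ∈ Σ⁺} of Σ′. -/
noncomputable section

/-- A positive system of a finite root system `R` inside a lattice `X`: a subset of
the form `{α ∈ R : f α > 0}` for an additive functional `f : X → ℝ` that is nonzero
on every element of `R`. -/
def IsPositiveSystem {X : Type*} [AddCommGroup X] (R P : Set X) : Prop :=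
  ∃ f : X →+ ℝ, (∀ α ∈ R, f α ≠ 0) ∧ P = {α ∈ R | 0 < f α}

/-- The simple roots of a positive system `P`: the elements of `P` that are not sums
of two elements of `P`. -/
def simpleRoots {X : Type*} [AddCommGroup X] (P : Set X) : Set X :=
  {α ∈ P | ¬ ∃ β ∈ P, ∃ γ ∈ P, α = β + γ}

set_option linter.unusedVariables false
set_option maxHeartbeats 1600000

namespace MRD

/-- coefficient sequence for powers of a product of two reflections -/
def vseq (a b : ℤ) : ℕ → ℤ × ℤ := fun n =>
  Nat.rec ((1:ℤ), (0:ℤ)) (fun _ q => ((a*b-1)*q.1 + b*q.2, -a*q.1 - q.2)) n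

lemma vseq_zero (a b : ℤ) : vseq a b 0 = (1, 0) := rfl

lemma vseq_succ (a b : ℤ) (k : ℕ) :
    vseq a b (k+1) = ((a*b-1)*(vseq a b k).1 + b*(vseq a b k).2,
      -a*(vseq a b k).1 - (vseq a b k).2) := rfl

lemma vseq_rec (a b : ℤ) (k : ℕ) :
    (vseq a b (k+2)).1 = (a*b-2) * (vseq a b (k+1)).1 - (vseq a b k).1 := by
  rw [vseq_succ a b (k+1), vseq_succ a b k]
  simp only
  ring

lemma vseq_mono (a b : ℤ) (hab : 4 ≤ a*b) :
    StrictMono fun k => (vseq a b k).1 := by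
  have key : ∀ k, 1 ≤ (vseq a b k).1 ∧ (vseq a b k).1 < (vseq a b (k+1)).1 := by
    intro k
    induction k with
    | zero =>
      rw [vseq_succ, vseq_zero]
      norm_num
      linarith
    | succ k ih =>
      obtain ⟨h1, h2⟩ := ih
      refine ⟨by linarith, ?_⟩
      rw [vseq_rec a b k]
      nlinarith
  exact strictMono_nat_of_lt_succ fun n => (key n).2

lemma pos_of_eq {m A C : ℤ} (h : m * A = C) (hA : 0 < A) (hC : 0 < C) : 0 < m := by nlinarith

lemma neg_of_eq {m A C : ℤ} (h : m * A = C) (hA : 0 < A) (hC : C < 0) : m < 0 := by nlinarith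

lemma zero_of_eq {m A : ℤ} (h : m * A = 0) (hA : 0 < A) : m = 0 := by
  rcases mul_eq_zero.mp h with h1 | h1
  · exact h1
  · omega

variable {X Y : Type*} [AddCommGroup X] [AddCommGroup Y]
variable {p : X →ₗ[ℤ] Y →ₗ[ℤ] ℤ} {Φ : Finset X} {cor : X → Y}

lemma root_ne (hpair : ∀ α ∈ Φ, p α (cor α) = 2) {α : X} (hα : α ∈ Φ) : α ≠ 0 := by
  intro h
  have := hpair α hα
  rw [h] at this
  simp at this

lemma srefl
    (hrefl : ∀ α ∈ Φ, ∀ β ∈ Φ, ∃ γ ∈ Φ,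
      β - p β (cor α) • α = γ ∧ cor β - p α (cor β) • cor α = cor γ)
    {α β : X} (hα : α ∈ Φ) (hβ : β ∈ Φ) :
    (β - p β (cor α) • α ∈ Φ) ∧
      cor (β - p β (cor α) • α) = cor β - p α (cor β) • cor α := by
  obtain ⟨γ, hγ, h1, h2⟩ := hrefl α hα β hβ
  rw [h1]
  exact ⟨hγ, h2.symm⟩

lemma neg_mem (hpair : ∀ α ∈ Φ, p α (cor α) = 2)
    (hrefl : ∀ α ∈ Φ, ∀ β ∈ Φ, ∃ γ ∈ Φ,
      β - p β (cor α) • α = γ ∧ cor β - p α (cor β) • cor α = cor γ)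
    {α : X} (hα : α ∈ Φ) : -α ∈ Φ ∧ cor (-α) = -cor α := by
  have h := srefl hrefl hα hα
  rw [hpair α hα] at h
  have e1 : α - (2 : ℤ) • α = -α := by rw [two_smul]; abel
  rw [e1] at h
  refine ⟨h.1, ?_⟩
  rw [h.2, two_smul]; abel

lemma k_eq (hpair : ∀ α ∈ Φ, p α (cor α) = 2)
    (hred : ∀ α ∈ Φ, ∀ β ∈ Φ, (∃ a b : ℤ, b ≠ 0 ∧ b • β = a • α) → β = α ∨ β = -α)
    (htfX : ∀ (c : ℤ) (x : X), c • x = 0 → c = 0 ∨ x = 0)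
    {α β : X} (hα : α ∈ Φ) (hβ : β ∈ Φ) {k : ℤ} (h : k • β = α) :
    k = 1 ∨ k = -1 := by
  have hk : k ≠ 0 := by
    rintro rfl
    exact root_ne hpair hα (by simpa using h.symm)
  have := hred α hα β hβ ⟨1, k, hk, by simpa using h⟩
  rcases this with h1 | h1
  · left
    subst h1
    have : (k - 1) • β = 0 := by rw [sub_smul, h]; simp
    rcases htfX _ _ this with h2 | h2
    · omega
    · exact absurd h2 (root_ne hpair hβ)
  · right
    subst h1
    have h' : (k + 1) • α = 0 := by
      rw [smul_neg] at h
      rw [add_smul, one_smul, ← neg_neg (k • α), h]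
      abel
    rcases htfX _ _ h' with h2 | h2
    · omega
    · exact absurd h2 (root_ne hpair hα)

lemma not_two_smul (hpair : ∀ α ∈ Φ, p α (cor α) = 2)
    (hred : ∀ α ∈ Φ, ∀ β ∈ Φ, (∃ a b : ℤ, b ≠ 0 ∧ b • β = a • α) → β = α ∨ β = -α)
    (htfX : ∀ (c : ℤ) (x : X), c • x = 0 → c = 0 ∨ x = 0)
    {α β : X} (hα : α ∈ Φ) (hβ : β ∈ Φ) (h : (2:ℤ) • β = α) : False := by
  rcases k_eq hpair hred htfX hα hβ h with h1 | h1 <;> omega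

lemma two_dvd_p {τ : X} (h2 : ∃ u, τ = (2:ℤ) • u) (y : Y) : ∃ k, p τ y = 2 * k := by
  obtain ⟨u, rfl⟩ := h2
  exact ⟨p u y, by simp [map_smul]⟩

/-- an integral `W`-invariant bilinear form -/
def Bf (p : X →ₗ[ℤ] Y →ₗ[ℤ] ℤ) (Φ : Finset X) (cor : X → Y) (x y : X) : ℤ :=
  ∑ δ ∈ Φ, p x (cor δ) * p y (cor δ)

lemma B_symm (x y : X) : Bf p Φ cor x y = Bf p Φ cor y x :=
  Finset.sum_congr rfl fun δ _ => mul_comm _ _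

lemma B_self_pos (hpair : ∀ α ∈ Φ, p α (cor α) = 2) {α : X} (hα : α ∈ Φ) :
    0 < Bf p Φ cor α α := by
  have h1 : p α (cor α) * p α (cor α) = 4 := by rw [hpair α hα]; norm_num
  have h2 : (4:ℤ) ≤ Bf p Φ cor α α :=
    calc (4:ℤ) = p α (cor α) * p α (cor α) := h1.symm
      _ ≤ ∑ δ ∈ Φ, p α (cor δ) * p α (cor δ) :=
        Finset.single_le_sum (f := fun δ => p α (cor δ) * p α (cor δ))
          (fun δ _ => mul_self_nonneg _) hα
  linarith

lemma B_sub_left (x y z : X) (c : ℤ) :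
    Bf p Φ cor (x - c • z) y = Bf p Φ cor x y - c * Bf p Φ cor z y := by
  unfold Bf
  rw [Finset.mul_sum, ← Finset.sum_sub_distrib]
  refine Finset.sum_congr rfl fun δ _ => ?_
  simp only [map_sub, map_smul, LinearMap.sub_apply, LinearMap.smul_apply,
    smul_eq_mul]
  ring

lemma B_neg_right (x y : X) : Bf p Φ cor x (-y) = -Bf p Φ cor x y := by
  unfold Bf
  rw [← Finset.sum_neg_distrib]
  refine Finset.sum_congr rfl fun δ _ => ?_
  simp only [map_neg, LinearMap.neg_apply]
  ring

lemma B_reflect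
    (hpair : ∀ α ∈ Φ, p α (cor α) = 2)
    (hrefl : ∀ α ∈ Φ, ∀ β ∈ Φ, ∃ γ ∈ Φ,
      β - p β (cor α) • α = γ ∧ cor β - p α (cor β) • cor α = cor γ)
    {α : X} (hα : α ∈ Φ) (x y : X) :
    Bf p Φ cor (x - p x (cor α) • α) (y - p y (cor α) • α) = Bf p Φ cor x y := by
  classical
  set σ : X → X := fun δ => δ - p δ (cor α) • α with hσ
  have hcorσ : ∀ δ ∈ Φ, σ δ ∈ Φ ∧ cor (σ δ) = cor δ - p α (cor δ) • cor α := by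
    intro δ hδ
    obtain ⟨γ, hγ, h1, h2⟩ := hrefl α hα δ hδ
    have : σ δ = γ := h1
    rw [this, ← h2]
    exact ⟨hγ, rfl⟩
  have hinv : ∀ δ ∈ Φ, σ (σ δ) = δ := by
    intro δ hδ
    show (δ - p δ (cor α) • α) - p (δ - p δ (cor α) • α) (cor α) • α = δ
    have h2 : p (δ - p δ (cor α) • α) (cor α) = - p δ (cor α) := by
      simp only [map_sub, map_smul, LinearMap.sub_apply, LinearMap.smul_apply,
        smul_eq_mul, hpair α hα]
      ring
    rw [h2, neg_smul]
    abel
  have hval : ∀ δ ∈ Φ,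
      p (x - p x (cor α) • α) (cor δ) * p (y - p y (cor α) • α) (cor δ)
        = p x (cor (σ δ)) * p y (cor (σ δ)) := by
    intro δ hδ
    rw [(hcorσ δ hδ).2]
    simp only [map_sub, map_smul, LinearMap.sub_apply, LinearMap.smul_apply,
      smul_eq_mul]
    ring
  unfold Bf
  rw [Finset.sum_congr rfl hval]
  exact Finset.sum_nbij' σ σ (fun δ hδ => (hcorσ δ hδ).1) (fun δ hδ => (hcorσ δ hδ).1)
    hinv hinv (fun δ hδ => rfl)

lemma B_inv
    (hpair : ∀ α ∈ Φ, p α (cor α) = 2)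
    (hrefl : ∀ α ∈ Φ, ∀ β ∈ Φ, ∃ γ ∈ Φ,
      β - p β (cor α) • α = γ ∧ cor β - p α (cor β) • cor α = cor γ)
    {α : X} (hα : α ∈ Φ) (x : X) :
    2 * Bf p Φ cor x α = p x (cor α) * Bf p Φ cor α α := by
  have h := B_reflect hpair hrefl hα x α
  have hsα : α - p α (cor α) • α = -α := by
    rw [hpair α hα, two_smul]; abel
  rw [hsα, B_neg_right, B_sub_left] at h
  linarith

lemma F2
    (hpair : ∀ α ∈ Φ, p α (cor α) = 2)
    (hrefl : ∀ α ∈ Φ, ∀ β ∈ Φ, ∃ γ ∈ Φ,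
      β - p β (cor α) • α = γ ∧ cor β - p α (cor β) • cor α = cor γ)
    {β γ : X} (hβ : β ∈ Φ) (hγ : γ ∈ Φ) :
    p β (cor γ) * Bf p Φ cor γ γ = p γ (cor β) * Bf p Φ cor β β := by
  have h1 := B_inv hpair hrefl hγ β
  have h2 := B_inv hpair hrefl hβ γ
  rw [B_symm γ β] at h2
  linarith

lemma prod_le_three
    (hpair : ∀ α ∈ Φ, p α (cor α) = 2)
    (hrefl : ∀ α ∈ Φ, ∀ β ∈ Φ, ∃ γ ∈ Φ,
      β - p β (cor α) • α = γ ∧ cor β - p α (cor β) • cor α = cor γ)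
    {β γ : X} (hβ : β ∈ Φ) (hγ : γ ∈ Φ)
    (indep : ∀ m n : ℤ, m • β = n • γ → m = 0) :
    p β (cor γ) * p γ (cor β) ≤ 3 := by
  classical
  by_contra h34
  push_neg at h34
  have hab : 4 ≤ p β (cor γ) * p γ (cor β) := h34
  set a := p β (cor γ) with ha
  set b := p γ (cor β) with hb
  set x : ℕ → X := fun k => (vseq a b k).1 • β + (vseq a b k).2 • γ with hxdef
  have hx : ∀ k, x k ∈ Φ := by
    intro k
    induction k with
    | zero =>
      have : x 0 = β := by simp [hxdef, vseq_zero]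
      rw [this]; exact hβ
    | succ k ih =>
      obtain ⟨u, hu, hu1, _⟩ := hrefl γ hγ (x k) ih
      obtain ⟨w, hw, hw1, _⟩ := hrefl β hβ u hu
      have hpxk : p (x k) (cor γ) = (vseq a b k).1 * a + (vseq a b k).2 * 2 := by
        simp only [hxdef, map_add, map_smul, LinearMap.add_apply, LinearMap.smul_apply,
          smul_eq_mul, hpair γ hγ, ← ha]
      have hpu : p u (cor β) =
          ((vseq a b k).1 * 2 + (vseq a b k).2 * b)
            - ((vseq a b k).1 * a + (vseq a b k).2 * 2) * b := by
        rw [← hu1, map_sub, map_smul]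
        simp only [LinearMap.sub_apply, LinearMap.smul_apply, smul_eq_mul, hpxk]
        simp only [hxdef, map_add, map_smul, LinearMap.add_apply, LinearMap.smul_apply,
          smul_eq_mul, hpair β hβ, ← hb]
        try ring
      have hwx : w = x (k+1) := by
        rw [← hw1, hpu, ← hu1, hpxk]
        simp only [hxdef, vseq_succ]
        module
      rw [← hwx]; exact hw
  have hmono := vseq_mono a b hab
  have key : ∀ j k : ℕ, j < k → x j = x k → False := by
    intro j k hlt heq
    have hc : (vseq a b k).1 - (vseq a b j).1 ≠ 0 := by
      have := hmono hlt; simp only at this; omega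
    have h' : ((vseq a b k).1 - (vseq a b j).1) • β
        = ((vseq a b j).2 - (vseq a b k).2) • γ := by
      rw [sub_smul, sub_smul, sub_eq_sub_iff_add_eq_add]
      simp only [hxdef] at heq
      rw [← heq]
      abel
    exact hc (indep _ _ h')
  have hxinj : Function.Injective (fun k => (⟨x k, hx k⟩ : {a // a ∈ Φ})) := by
    intro j k hjk
    have heq : x j = x k := congrArg Subtype.val hjk
    by_contra hne
    rcases lt_or_gt_of_ne hne with h | h
    · exact key j k h heq
    · exact key k j h heq.symm
  exact @not_finite ℕ _ (Finite.of_injective _ hxinj)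

lemma small_prod_zero {t : ℤ} (h0 : 0 ≤ 4*t) (h3 : 4*t ≤ 3) : t = 0 := by omega

lemma zero_transfer
    (hpair : ∀ α ∈ Φ, p α (cor α) = 2)
    (hrefl : ∀ α ∈ Φ, ∀ β ∈ Φ, ∃ γ ∈ Φ,
      β - p β (cor α) • α = γ ∧ cor β - p α (cor β) • cor α = cor γ)
    {β γ : X} (hβ : β ∈ Φ) (hγ : γ ∈ Φ) (h : p β (cor γ) = 0) :
    p γ (cor β) = 0 := by
  have hF2 := F2 hpair hrefl hβ hγ
  rw [h, zero_mul] at hF2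
  exact zero_of_eq hF2.symm (B_self_pos hpair hβ)

lemma prod_bound
    (hpair : ∀ α ∈ Φ, p α (cor α) = 2)
    (hrefl : ∀ α ∈ Φ, ∀ β ∈ Φ, ∃ γ ∈ Φ,
      β - p β (cor α) • α = γ ∧ cor β - p α (cor β) • cor α = cor γ)
    (hred : ∀ α ∈ Φ, ∀ β ∈ Φ, (∃ a b : ℤ, b ≠ 0 ∧ b • β = a • α) → β = α ∨ β = -α)
    {β γ : X} (hβ : β ∈ Φ) (hγ : γ ∈ Φ) (hne1 : β ≠ γ) (hne2 : β ≠ -γ) :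
    0 ≤ p β (cor γ) * p γ (cor β) ∧ p β (cor γ) * p γ (cor β) ≤ 3 := by
  have indep : ∀ m n : ℤ, m • β = n • γ → m = 0 := by
    intro m n h
    by_contra hm
    rcases hred γ hγ β hβ ⟨n, m, hm, h⟩ with h1 | h1
    · exact hne1 h1
    · exact hne2 h1
  refine ⟨?_, prod_le_three hpair hrefl hβ hγ indep⟩
  have hF2 := F2 hpair hrefl hβ hγ
  have hG := B_self_pos hpair hγ
  have hB := B_self_pos hpair hβ
  rcases lt_trichotomy (p β (cor γ)) 0 with h | h | h
  · have hC : p β (cor γ) * Bf p Φ cor γ γ < 0 := mul_neg_of_neg_of_pos h hG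
    have hb : p γ (cor β) < 0 := neg_of_eq hF2.symm hB hC
    exact le_of_lt (mul_pos_of_neg_of_neg h hb)
  · rw [h]; simp
  · have hC : 0 < p β (cor γ) * Bf p Φ cor γ γ := mul_pos h hG
    have hb : 0 < p γ (cor β) := pos_of_eq hF2.symm hB hC
    exact le_of_lt (mul_pos h hb)

lemma sum2X_false
    (hpair : ∀ α ∈ Φ, p α (cor α) = 2)
    (hrefl : ∀ α ∈ Φ, ∀ β ∈ Φ, ∃ γ ∈ Φ,
      β - p β (cor α) • α = γ ∧ cor β - p α (cor β) • cor α = cor γ)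
    (hred : ∀ α ∈ Φ, ∀ β ∈ Φ, (∃ a b : ℤ, b ≠ 0 ∧ b • β = a • α) → β = α ∨ β = -α)
    (htfX : ∀ (c : ℤ) (x : X), c • x = 0 → c = 0 ∨ x = 0)
    {α β γ : X} (hα : α ∈ Φ) (hβ : β ∈ Φ) (hγ : γ ∈ Φ)
    (h2β : ∃ u, β = (2:ℤ) • u) (h2γ : ∃ u, γ = (2:ℤ) • u)
    (hsum : α = β + γ) : False := by
  have hne1 : β ≠ γ := by
    rintro rfl
    exact not_two_smul hpair hred htfX hα hβ (by rw [hsum, two_smul])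
  have hne2 : β ≠ -γ := by
    rintro rfl
    exact root_ne hpair hα (hsum.trans (by abel))
  obtain ⟨hb0, hb3⟩ := prod_bound hpair hrefl hred hβ hγ hne1 hne2
  obtain ⟨a', ha'⟩ := two_dvd_p (p := p) h2β (cor γ)
  obtain ⟨b', hb'⟩ := two_dvd_p (p := p) h2γ (cor β)
  have hF2 := F2 hpair hrefl hβ hγ
  have hG := B_self_pos hpair hγ
  have hB := B_self_pos hpair hβ
  have hA := B_self_pos hpair hα
  have hzero : p β (cor γ) = 0 ∧ p γ (cor β) = 0 := by
    rw [ha', hb'] at hb0 hb3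
    have h0' : 0 ≤ 4*(a'*b') := by linarith
    have h3' : 4*(a'*b') ≤ 3 := by linarith
    have h1 : a' * b' = 0 := small_prod_zero h0' h3'
    rcases mul_eq_zero.mp h1 with h2 | h2
    · have ha0 : p β (cor γ) = 0 := by omega
      exact ⟨ha0, zero_transfer hpair hrefl hβ hγ ha0⟩
    · have hb0' : p γ (cor β) = 0 := by omega
      exact ⟨zero_transfer hpair hrefl hγ hβ hb0', hb0'⟩
  have e1 : p α (cor β) = 2 + p γ (cor β) := by
    rw [hsum]
    simp [map_add, LinearMap.add_apply, hpair β hβ]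
  have e2 : p α (cor γ) = p β (cor γ) + 2 := by
    rw [hsum]
    simp [map_add, LinearMap.add_apply, hpair γ hγ]
  have e3 : p β (cor α) + p γ (cor α) = 2 := by
    have h := hpair α hα
    nth_rewrite 1 [hsum] at h
    simpa [map_add, LinearMap.add_apply] using h
  have hF2βα := F2 hpair hrefl hβ hα
  have hF2γα := F2 hpair hrefl hγ hα
  have hm : 0 < p β (cor α) := by
    apply pos_of_eq hF2βα hA
    rw [e1, hzero.2]
    nlinarith
  have hn : 0 < p γ (cor α) := by
    apply pos_of_eq hF2γα hA
    rw [e2, hzero.1]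
    nlinarith
  obtain ⟨m', hm'⟩ := two_dvd_p (p := p) h2β (cor α)
  obtain ⟨n', hn'⟩ := two_dvd_p (p := p) h2γ (cor α)
  omega

lemma caseC3
    (hpair : ∀ α ∈ Φ, p α (cor α) = 2)
    (hrefl : ∀ α ∈ Φ, ∀ β ∈ Φ, ∃ γ ∈ Φ,
      β - p β (cor α) • α = γ ∧ cor β - p α (cor β) • cor α = cor γ)
    (hred : ∀ α ∈ Φ, ∀ β ∈ Φ, (∃ a b : ℤ, b ≠ 0 ∧ b • β = a • α) → β = α ∨ β = -α)
    (htfX : ∀ (c : ℤ) (x : X), c • x = 0 → c = 0 ∨ x = 0)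
    {α β γ : X} (hα : α ∈ Φ) (hβ : β ∈ Φ) (hγ : γ ∈ Φ)
    (h2α : ∃ u, α = (2:ℤ) • u)
    (hsum : α = β + γ) : p α (cor β) = 2 := by
  have hne1 : β ≠ γ := by
    rintro rfl
    exact not_two_smul hpair hred htfX hα hβ (by rw [hsum, two_smul])
  have hne2 : β ≠ -γ := by
    rintro rfl
    exact root_ne hpair hα (hsum.trans (by abel))
  obtain ⟨hb0, hb3⟩ := prod_bound hpair hrefl hred hβ hγ hne1 hne2
  have hF2 := F2 hpair hrefl hβ hγ
  have hG := B_self_pos hpair hγ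
  have hB := B_self_pos hpair hβ
  have e1 : p α (cor β) = 2 + p γ (cor β) := by
    rw [hsum]
    simp [map_add, LinearMap.add_apply, hpair β hβ]
  have e2 : p α (cor γ) = p β (cor γ) + 2 := by
    rw [hsum]
    simp [map_add, LinearMap.add_apply, hpair γ hγ]
  obtain ⟨k1, hk1⟩ := two_dvd_p (p := p) h2α (cor γ)
  obtain ⟨k2, hk2⟩ := two_dvd_p (p := p) h2α (cor β)
  -- a and b are both even, hence a*b = 0, hence b = 0
  have hbz : p γ (cor β) = 0 := by
    have ha2 : p β (cor γ) = 2*(k1-1) := by omega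
    have hb2 : p γ (cor β) = 2*(k2-1) := by omega
    rw [ha2, hb2] at hb0 hb3
    have h0' : 0 ≤ 4*((k1-1)*(k2-1)) := by linarith
    have h3' : 4*((k1-1)*(k2-1)) ≤ 3 := by linarith
    have h1 := small_prod_zero h0' h3'
    rcases mul_eq_zero.mp h1 with h2 | h2
    · have ha0 : p β (cor γ) = 0 := by omega
      exact zero_transfer hpair hrefl hβ hγ ha0
    · omega
  omega

lemma caseC5
    (hpair : ∀ α ∈ Φ, p α (cor α) = 2)
    (hrefl : ∀ α ∈ Φ, ∀ β ∈ Φ, ∃ γ ∈ Φ,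
      β - p β (cor α) • α = γ ∧ cor β - p α (cor β) • cor α = cor γ)
    (hred : ∀ α ∈ Φ, ∀ β ∈ Φ, (∃ a b : ℤ, b ≠ 0 ∧ b • β = a • α) → β = α ∨ β = -α)
    (htfX : ∀ (c : ℤ) (x : X), c • x = 0 → c = 0 ∨ x = 0)
    {α β γ : X} (hα : α ∈ Φ) (hβ : β ∈ Φ) (hγ : γ ∈ Φ)
    (h2β : ∃ u, β = (2:ℤ) • u) (hne1 : β ≠ γ)
    (hsum : α = β + γ) : p β (cor γ) = -2 := by
  have hne2 : β ≠ -γ := by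
    rintro rfl
    exact root_ne hpair hα (hsum.trans (by abel))
  obtain ⟨hb0, hb3⟩ := prod_bound hpair hrefl hred hβ hγ hne1 hne2
  have hF2 := F2 hpair hrefl hβ hγ
  have hG := B_self_pos hpair hγ
  have hB := B_self_pos hpair hβ
  have hA := B_self_pos hpair hα
  have e1 : p α (cor β) = 2 + p γ (cor β) := by
    rw [hsum]
    simp [map_add, LinearMap.add_apply, hpair β hβ]
  have e2 : p α (cor γ) = p β (cor γ) + 2 := by
    rw [hsum]
    simp [map_add, LinearMap.add_apply, hpair γ hγ]
  have e3 : p β (cor α) + p γ (cor α) = 2 := by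
    have h := hpair α hα
    nth_rewrite 1 [hsum] at h
    simpa [map_add, LinearMap.add_apply] using h
  have hF2βα := F2 hpair hrefl hβ hα
  have hF2γα := F2 hpair hrefl hγ hα
  obtain ⟨a', ha'⟩ := two_dvd_p (p := p) h2β (cor γ)
  obtain ⟨m', hm'⟩ := two_dvd_p (p := p) h2β (cor α)
  rcases lt_trichotomy (p β (cor γ)) 0 with hs | hs | hs
  · -- a < 0, hence b < 0, hence a = -2
    have hbneg : p γ (cor β) < 0 :=
      neg_of_eq hF2.symm hB (mul_neg_of_neg_of_pos hs hG)
    by_contra hne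
    have ha4 : p β (cor γ) ≤ -4 := by omega
    have hb1 : p γ (cor β) ≤ -1 := by omega
    nlinarith
  · -- a = 0 : contradiction
    exfalso
    have hbz : p γ (cor β) = 0 := zero_transfer hpair hrefl hβ hγ hs
    have hm : 0 < p β (cor α) := by
      apply pos_of_eq hF2βα hA
      rw [e1, hbz]
      nlinarith
    have hn : 0 < p γ (cor α) := by
      apply pos_of_eq hF2γα hA
      rw [e2, hs]
      nlinarith
    omega
  · -- a > 0 : contradiction
    exfalso
    have hbpos : 0 < p γ (cor β) :=
      pos_of_eq hF2.symm hB (mul_pos hs hG)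
    have hm : 0 < p β (cor α) := by
      apply pos_of_eq hF2βα hA
      rw [e1]
      nlinarith
    have hn : 0 < p γ (cor α) := by
      apply pos_of_eq hF2γα hA
      rw [e2]
      nlinarith
    omega

lemma caseD2
    (hpair : ∀ α ∈ Φ, p α (cor α) = 2)
    (hrefl : ∀ α ∈ Φ, ∀ β ∈ Φ, ∃ γ ∈ Φ,
      β - p β (cor α) • α = γ ∧ cor β - p α (cor β) • cor α = cor γ)
    (hred : ∀ α ∈ Φ, ∀ β ∈ Φ, (∃ a b : ℤ, b ≠ 0 ∧ b • β = a • α) → β = α ∨ β = -α)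
    (htfX : ∀ (c : ℤ) (x : X), c • x = 0 → c = 0 ∨ x = 0)
    {α β γ : X} (hα : α ∈ Φ) (hβ : β ∈ Φ) (hγ : γ ∈ Φ)
    (h2β : ∃ u, β = (2:ℤ) • u) (hne1 : β ≠ γ) (hne2 : α ≠ γ)
    (heq : α = β + (2:ℤ) • γ) : p γ (cor β) = -1 := by
  have hne2' : β ≠ -γ := by
    rintro rfl
    exact hne2 (heq.trans (by rw [two_smul]; abel))
  obtain ⟨hb0, hb3⟩ := prod_bound hpair hrefl hred hβ hγ hne1 hne2'
  have hF2 := F2 hpair hrefl hβ hγ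
  have hG := B_self_pos hpair hγ
  have hB := B_self_pos hpair hβ
  have hA := B_self_pos hpair hα
  have e1 : p α (cor β) = 2 + 2 * p γ (cor β) := by
    rw [heq]
    simp [map_add, map_smul, LinearMap.add_apply, LinearMap.smul_apply,
      smul_eq_mul, hpair β hβ]
  have e2 : p α (cor γ) = p β (cor γ) + 4 := by
    rw [heq]
    simp [map_add, map_smul, LinearMap.add_apply, LinearMap.smul_apply,
      smul_eq_mul, hpair γ hγ]
    try ring
  have e3 : p β (cor α) + 2 * p γ (cor α) = 2 := by
    have h := hpair α hα
    nth_rewrite 1 [heq] at h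
    simp only [map_add, map_smul, LinearMap.add_apply, LinearMap.smul_apply,
      smul_eq_mul] at h
    linarith
  have hF2βα := F2 hpair hrefl hβ hα
  have hF2γα := F2 hpair hrefl hγ hα
  obtain ⟨a', ha'⟩ := two_dvd_p (p := p) h2β (cor γ)
  obtain ⟨m', hm'⟩ := two_dvd_p (p := p) h2β (cor α)
  rcases lt_trichotomy (p γ (cor β)) 0 with hs | hs | hs
  · -- b < 0, hence a < 0 even, so a ≤ -2; if b ≤ -2 then a*b ≥ 4, contradiction
    have haneg : p β (cor γ) < 0 :=
      neg_of_eq hF2 hG (mul_neg_of_neg_of_pos hs hB)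
    by_contra hne
    have hb2 : p γ (cor β) ≤ -2 := by omega
    have ha2 : p β (cor γ) ≤ -2 := by omega
    nlinarith
  · -- b = 0 : contradiction
    exfalso
    have haz : p β (cor γ) = 0 := zero_transfer hpair hrefl hγ hβ hs
    have hm : 0 < p β (cor α) := by
      apply pos_of_eq hF2βα hA
      rw [e1, hs]
      nlinarith
    have hn : 0 < p γ (cor α) := by
      apply pos_of_eq hF2γα hA
      rw [e2, haz]
      nlinarith
    omega
  · -- b > 0 : contradiction
    exfalso
    have hapos : 0 < p β (cor γ) :=
      pos_of_eq hF2 hG (mul_pos hs hB)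
    have hm : 0 < p β (cor α) := by
      apply pos_of_eq hF2βα hA
      rw [e1]
      nlinarith
    have hn : 0 < p γ (cor α) := by
      apply pos_of_eq hF2γα hA
      rw [e2]
      nlinarith
    omega

lemma caseD3
    (hpair : ∀ α ∈ Φ, p α (cor α) = 2)
    (hrefl : ∀ α ∈ Φ, ∀ β ∈ Φ, ∃ γ ∈ Φ,
      β - p β (cor α) • α = γ ∧ cor β - p α (cor β) • cor α = cor γ)
    (hred : ∀ α ∈ Φ, ∀ β ∈ Φ, (∃ a b : ℤ, b ≠ 0 ∧ b • β = a • α) → β = α ∨ β = -α)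
    (htfX : ∀ (c : ℤ) (x : X), c • x = 0 → c = 0 ∨ x = 0)
    {α β γ : X} (hα : α ∈ Φ) (hβ : β ∈ Φ) (hγ : γ ∈ Φ)
    (heq : α = (2:ℤ) • β + (2:ℤ) • γ) : False := by
  have hne1 : β ≠ γ := by
    rintro rfl
    have h4 : (4:ℤ) • β = α := by rw [heq]; module
    rcases k_eq hpair hred htfX hα hβ h4 with h | h <;> omega
  have hne2 : β ≠ -γ := by
    rintro rfl
    exact root_ne hpair hα (heq.trans (by rw [smul_neg]; abel))
  obtain ⟨hb0, hb3⟩ := prod_bound hpair hrefl hred hβ hγ hne1 hne2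
  have hF2 := F2 hpair hrefl hβ hγ
  have hG := B_self_pos hpair hγ
  have hB := B_self_pos hpair hβ
  have hA := B_self_pos hpair hα
  have e1 : p α (cor β) = 4 + 2 * p γ (cor β) := by
    rw [heq]
    simp [map_add, map_smul, LinearMap.add_apply, LinearMap.smul_apply,
      smul_eq_mul, hpair β hβ]
    try ring
  have e2 : p α (cor γ) = 2 * p β (cor γ) + 4 := by
    rw [heq]
    simp [map_add, map_smul, LinearMap.add_apply, LinearMap.smul_apply,
      smul_eq_mul, hpair γ hγ]
    try ring
  have e3 : p β (cor α) + p γ (cor α) = 1 := by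
    have h := hpair α hα
    nth_rewrite 1 [heq] at h
    simp only [map_add, map_smul, LinearMap.add_apply, LinearMap.smul_apply,
      smul_eq_mul] at h
    linarith
  have hF2βα := F2 hpair hrefl hβ hα
  have hF2γα := F2 hpair hrefl hγ hα
  -- the two pairings have opposite signs available; show one of a, b equals -1
  have hkey : p β (cor γ) = -1 ∨ p γ (cor β) = -1 := by
    rcases lt_trichotomy (p β (cor γ)) 0 with hs | hs | hs
    · have hbneg : p γ (cor β) < 0 :=
        neg_of_eq hF2.symm hB (mul_neg_of_neg_of_pos hs hG)
      by_contra hne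
      push_neg at hne
      have ha2 : p β (cor γ) ≤ -2 := by omega
      have hb2 : p γ (cor β) ≤ -2 := by omega
      nlinarith
    · exfalso
      have hbz : p γ (cor β) = 0 := zero_transfer hpair hrefl hβ hγ hs
      have hm : 0 < p β (cor α) := by
        apply pos_of_eq hF2βα hA
        rw [e1, hbz]
        nlinarith
      have hn : 0 < p γ (cor α) := by
        apply pos_of_eq hF2γα hA
        rw [e2, hs]
        nlinarith
      omega
    · exfalso
      have hbpos : 0 < p γ (cor β) :=
        pos_of_eq hF2.symm hB (mul_pos hs hG)
      have hm : 0 < p β (cor α) := by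
        apply pos_of_eq hF2βα hA
        rw [e1]
        nlinarith
      have hn : 0 < p γ (cor α) := by
        apply pos_of_eq hF2γα hA
        rw [e2]
        nlinarith
      omega
  rcases hkey with hk | hk
  · -- β + γ ∈ Φ and α = 2 • (β + γ)
    have hmem := (srefl hrefl hγ hβ).1
    rw [hk] at hmem
    have hmem' : β + γ ∈ Φ := by
      have : β - (-1 : ℤ) • γ = β + γ := by rw [neg_smul, one_smul]; abel
      rwa [this] at hmem
    exact not_two_smul hpair hred htfX hα hmem'
      (by rw [heq, smul_add])
  · have hmem := (srefl hrefl hβ hγ).1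
    rw [hk] at hmem
    have hmem' : γ + β ∈ Φ := by
      have : γ - (-1 : ℤ) • β = γ + β := by rw [neg_smul, one_smul]; abel
      rwa [this] at hmem
    exact not_two_smul hpair hred htfX hα hmem'
      (by rw [heq, smul_add]; abel)

lemma caseD4
    (hpair : ∀ α ∈ Φ, p α (cor α) = 2)
    (hrefl : ∀ α ∈ Φ, ∀ β ∈ Φ, ∃ γ ∈ Φ,
      β - p β (cor α) • α = γ ∧ cor β - p α (cor β) • cor α = cor γ)
    (hred : ∀ α ∈ Φ, ∀ β ∈ Φ, (∃ a b : ℤ, b ≠ 0 ∧ b • β = a • α) → β = α ∨ β = -α)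
    (htfX : ∀ (c : ℤ) (x : X), c • x = 0 → c = 0 ∨ x = 0)
    {α β γ : X} (hα : α ∈ Φ) (hβ : β ∈ Φ) (hγ : γ ∈ Φ)
    (h2β : ∃ u, β = (2:ℤ) • u) (h2γ : ∃ u, γ = (2:ℤ) • u) (hne1 : α ≠ β)
    (heq : (2:ℤ) • α = β + γ) : p α (cor β) = 1 := by
  have hne1' : β ≠ γ := by
    rintro rfl
    apply hne1
    have h0 : (2:ℤ) • (α - β) = 0 := by
      rw [smul_sub, heq, two_smul]
      abel
    rcases htfX _ _ h0 with h | h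
    · omega
    · rw [sub_eq_zero] at h; exact h
  have hne2 : β ≠ -γ := by
    rintro rfl
    have h0 : (2:ℤ) • α = 0 := by rw [heq]; abel
    rcases htfX _ _ h0 with h | h
    · omega
    · exact root_ne hpair hα h
  obtain ⟨hb0, hb3⟩ := prod_bound hpair hrefl hred hβ hγ hne1' hne2
  have hF2 := F2 hpair hrefl hβ hγ
  have hG := B_self_pos hpair hγ
  have hB := B_self_pos hpair hβ
  obtain ⟨a', ha'⟩ := two_dvd_p (p := p) h2β (cor γ)
  obtain ⟨b', hb'⟩ := two_dvd_p (p := p) h2γ (cor β)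
  have hbz : p γ (cor β) = 0 := by
    rw [ha', hb'] at hb0 hb3
    have h0' : 0 ≤ 4*(a'*b') := by linarith
    have h3' : 4*(a'*b') ≤ 3 := by linarith
    have h1 := small_prod_zero h0' h3'
    rcases mul_eq_zero.mp h1 with h2 | h2
    · have ha0 : p β (cor γ) = 0 := by omega
      exact zero_transfer hpair hrefl hβ hγ ha0
    · omega
  have e1 : 2 * p α (cor β) = 2 + p γ (cor β) := by
    have h := congrArg (fun z => p z (cor β)) heq
    simpa [map_add, map_smul, LinearMap.add_apply, LinearMap.smul_apply,
      smul_eq_mul, hpair β hβ] using h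
  omega

lemma caseD5
    (hpair : ∀ α ∈ Φ, p α (cor α) = 2)
    (hrefl : ∀ α ∈ Φ, ∀ β ∈ Φ, ∃ γ ∈ Φ,
      β - p β (cor α) • α = γ ∧ cor β - p α (cor β) • cor α = cor γ)
    (hred : ∀ α ∈ Φ, ∀ β ∈ Φ, (∃ a b : ℤ, b ≠ 0 ∧ b • β = a • α) → β = α ∨ β = -α)
    (htfX : ∀ (c : ℤ) (x : X), c • x = 0 → c = 0 ∨ x = 0)
    {α β γ : X} (hα : α ∈ Φ) (hβ : β ∈ Φ) (hγ : γ ∈ Φ)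
    (h2β : ∃ u, β = (2:ℤ) • u) (hne1 : β ≠ γ)
    (heq : (2:ℤ) • α = β + (2:ℤ) • γ) : False := by
  have hne2 : β ≠ -γ := by
    rintro rfl
    refine not_two_smul hpair hred htfX hγ hα ?_
    rw [heq, two_smul]
    abel
  obtain ⟨hb0, hb3⟩ := prod_bound hpair hrefl hred hβ hγ hne1 hne2
  have hF2 := F2 hpair hrefl hβ hγ
  have hG := B_self_pos hpair hγ
  have hB := B_self_pos hpair hβ
  have hA := B_self_pos hpair hα
  obtain ⟨a', ha'⟩ := two_dvd_p (p := p) h2β (cor γ)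
  obtain ⟨m', hm'⟩ := two_dvd_p (p := p) h2β (cor α)
  have e1 : 2 * p α (cor β) = 2 + 2 * p γ (cor β) := by
    have h := congrArg (fun z => p z (cor β)) heq
    simp only [map_add, map_smul, LinearMap.add_apply, LinearMap.smul_apply,
      smul_eq_mul, hpair β hβ] at h
    linarith
  have e2 : 2 * p α (cor γ) = p β (cor γ) + 4 := by
    have h := congrArg (fun z => p z (cor γ)) heq
    simp only [map_add, map_smul, LinearMap.add_apply, LinearMap.smul_apply,
      smul_eq_mul, hpair γ hγ] at h
    linarith
  have e3 : p β (cor α) + 2 * p γ (cor α) = 4 := by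
    have h := congrArg (fun z => p z (cor α)) heq
    simp only [map_add, map_smul, LinearMap.add_apply, LinearMap.smul_apply,
      smul_eq_mul, hpair α hα] at h
    linarith
  have hF2βα := F2 hpair hrefl hβ hα
  have hF2γα := F2 hpair hrefl hγ hα
  have hF2αγ := F2 hpair hrefl hα hγ
  -- in all cases, α - γ ∈ Φ
  have hεΦ : α - γ ∈ Φ := by
    have hkey : p α (cor γ) = 1 ∨ p γ (cor α) = 1 := by
      rcases lt_trichotomy (p β (cor γ)) 0 with hs | hs | hs
      · -- a < 0 even, b < 0, a = -2, b = -1, p α (cor γ) = 1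
        have hbneg : p γ (cor β) < 0 :=
          neg_of_eq hF2.symm hB (mul_neg_of_neg_of_pos hs hG)
        have ha2 : p β (cor γ) = -2 := by
          by_contra hne
          have ha4 : p β (cor γ) ≤ -4 := by omega
          have hb1 : p γ (cor β) ≤ -1 := by omega
          nlinarith
        left; omega
      · -- a = 0: p α cor β = 1, m even positive = 2, n = 1
        have hbz : p γ (cor β) = 0 := zero_transfer hpair hrefl hβ hγ hs
        have hm : 0 < p β (cor α) := by
          apply pos_of_eq hF2βα hA
          nlinarith
        have hn : 0 < p γ (cor α) := by
          apply pos_of_eq hF2γα hA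
          nlinarith
        right; omega
      · -- a > 0: a = 2, b = 1, p α cor β = 2, p α cor γ = 3, m ≥ 2, n = 1
        have hbpos : 0 < p γ (cor β) :=
          pos_of_eq hF2.symm hB (mul_pos hs hG)
        have ha2 : p β (cor γ) = 2 := by
          by_contra hne
          have ha4 : (4:ℤ) ≤ p β (cor γ) := by omega
          nlinarith
        have hm : 0 < p β (cor α) := by
          apply pos_of_eq hF2βα hA
          nlinarith
        have hn : 0 < p γ (cor α) := by
          apply pos_of_eq hF2γα hA
          nlinarith
        right; omega
    rcases hkey with hk | hk
    · have hmem := (srefl hrefl hγ hα).1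
      rw [hk, one_smul] at hmem
      exact hmem
    · have hmem := (srefl hrefl hα hγ).1
      rw [hk, one_smul] at hmem
      have := (neg_mem hpair hrefl hmem).1
      rwa [neg_sub] at this
  exact not_two_smul hpair hred htfX hβ hεΦ
    (by rw [smul_sub, heq, two_smul]; abel)

end MRD


/-- Let `(X, Σ, Y, Σ∨)` be a reduced root datum with perfect pairing `p`, Weyl group
generated by the reflections `s_α`, and let `T ⊆ Σ` be a `W`-stable subset with
`T = −T` all of whose elements lie in `2X`.  Define `α′ = α/2`, `(α∨)′ = 2α∨` for
`α ∈ T` and `α′ = α`, `(α∨)′ = α∨` otherwise (the functions `prime`, `corprime`).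
Then `(X, Σ′, Y, (Σ′)∨)` is again a reduced root datum, the reflections attached to
`(α′, (α∨)′)` coincide with `s_α` (so the Weyl groups agree), and if `Δ` is the set
of simple roots of a positive system `Σ⁺` of `Σ`, then `Δ′` is the set of simple
roots of the positive system `(Σ⁺)′` of `Σ′`. -/
theorem modified_root_datum
    {X Y : Type*} [AddCommGroup X] [AddCommGroup Y]
    [Module.Free ℤ X] [Module.Finite ℤ X] [Module.Free ℤ Y] [Module.Finite ℤ Y]
    (p : X →ₗ[ℤ] Y →ₗ[ℤ] ℤ)
    (hperfX : Function.Bijective fun x : X => p x)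
    (hperfY : Function.Bijective fun y : Y => p.flip y)
    (Φ : Finset X) (cor : X → Y)
    (hpair : ∀ α ∈ Φ, p α (cor α) = 2)
    (hcorinj : ∀ α ∈ Φ, ∀ β ∈ Φ, cor α = cor β → α = β)
    (hrefl : ∀ α ∈ Φ, ∀ β ∈ Φ, ∃ γ ∈ Φ,
      β - p β (cor α) • α = γ ∧ cor β - p α (cor β) • cor α = cor γ)
    (hred : ∀ α ∈ Φ, ∀ β ∈ Φ, (∃ a b : ℤ, b ≠ 0 ∧ b • β = a • α) → β = α ∨ β = -α)
    (T : Set X) (hTsub : T ⊆ ↑Φ) (hTneg : ∀ τ ∈ T, -τ ∈ T)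
    (hTW : ∀ α ∈ Φ, ∀ τ ∈ T, τ - p τ (cor α) • α ∈ T)
    (hT2 : ∀ τ ∈ T, ∃ x : X, τ = (2 : ℤ) • x)
    (prime : X → X)
    (hprime : ∀ α ∈ Φ, (α ∈ T → (2 : ℤ) • prime α = α) ∧ (α ∉ T → prime α = α))
    (corprime : X → Y)
    (hcorprime : ∀ α ∈ Φ,
      (α ∈ T → corprime α = (2 : ℤ) • cor α) ∧ (α ∉ T → corprime α = cor α)) :
    -- `(X, Σ′, Y, (Σ′)∨)` is a reduced root datum:
    (∀ α ∈ Φ, p (prime α) (corprime α) = 2) ∧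
    (∀ α ∈ Φ, ∀ β ∈ Φ, (prime α = prime β ↔ corprime α = corprime β)) ∧
    (∀ α ∈ Φ, ∀ β ∈ Φ, ∃ γ ∈ Φ,
      prime β - p (prime β) (corprime α) • prime α = prime γ ∧
      corprime β - p (prime α) (corprime β) • corprime α = corprime γ) ∧
    (∀ α ∈ Φ, ∀ β ∈ Φ, (∃ a b : ℤ, b ≠ 0 ∧ b • prime β = a • prime α) →
      prime β = prime α ∨ prime β = -prime α) ∧
    -- the reflections attached to `(α′, (α∨)′)` coincide with `s_α`, on `Y` and `X`:
    (∀ α ∈ Φ, ∀ y : Y, y - p (prime α) y • corprime α = y - p α y • cor α) ∧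
    (∀ α ∈ Φ, ∀ x : X, x - p x (corprime α) • prime α = x - p x (cor α) • α) ∧
    -- hence the Weyl group of the new datum equals `W`:
    AddSubgroup.closure {e : AddAut Y | ∃ α ∈ Φ, ∀ y : Y, e y = y - p α y • cor α}
      = AddSubgroup.closure
          {e : AddAut Y | ∃ α ∈ Φ, ∀ y : Y, e y = y - p (prime α) y • corprime α} ∧
    -- positive systems and simple roots correspond:
    (∀ P : Set X, IsPositiveSystem (↑Φ) P →
      IsPositiveSystem (prime '' ↑Φ) (prime '' P) ∧
      prime '' simpleRoots P = simpleRoots (prime '' P)) := by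
  classical
  -- torsion-freeness of X and Y
  have htfX : ∀ (c : ℤ) (x : X), c • x = 0 → c = 0 ∨ x = 0 := by
    intro c x h
    by_cases hc : c = 0
    · exact Or.inl hc
    right
    have hpx : p x = p 0 := by
      rw [map_zero]
      ext y
      simp only [LinearMap.zero_apply]
      have h1 := congrArg (fun z => p z y) h
      simp only [map_smul, LinearMap.smul_apply, smul_eq_mul, map_zero,
        LinearMap.zero_apply] at h1
      exact (mul_eq_zero.mp h1).resolve_left hc
    exact hperfX.injective hpx
  have htfY : ∀ (c : ℤ) (y : Y), c • y = 0 → c = 0 ∨ y = 0 := by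
    intro c y h
    by_cases hc : c = 0
    · exact Or.inl hc
    right
    have hpy : p.flip y = p.flip 0 := by
      rw [map_zero]
      ext x
      simp only [LinearMap.zero_apply]
      have h1 := congrArg (fun z => p.flip z x) h
      simp only [map_smul, LinearMap.smul_apply, smul_eq_mul, map_zero,
        LinearMap.zero_apply] at h1
      exact (mul_eq_zero.mp h1).resolve_left hc
    exact hperfY.injective hpy
  have cancel2X : ∀ x y : X, (2:ℤ) • x = (2:ℤ) • y → x = y := by
    intro x y h
    have h0 : (2:ℤ) • (x - y) = 0 := by rw [smul_sub, h, sub_self]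
    rcases htfX _ _ h0 with h1 | h1
    · exact absurd h1 (by norm_num)
    · exact sub_eq_zero.mp h1
  have cancel2Y : ∀ x y : Y, (2:ℤ) • x = (2:ℤ) • y → x = y := by
    intro x y h
    have h0 : (2:ℤ) • (x - y) = 0 := by rw [smul_sub, h, sub_self]
    rcases htfY _ _ h0 with h1 | h1
    · exact absurd h1 (by norm_num)
    · exact sub_eq_zero.mp h1
  -- prime and corprime basics
  have hprT : ∀ α, α ∈ Φ → α ∈ T → (2:ℤ) • prime α = α := fun α h1 h2 => (hprime α h1).1 h2
  have hprF : ∀ α, α ∈ Φ → α ∉ T → prime α = α := fun α h1 h2 => (hprime α h1).2 h2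
  have hcpT : ∀ α, α ∈ Φ → α ∈ T → corprime α = (2:ℤ) • cor α :=
    fun α h1 h2 => (hcorprime α h1).1 h2
  have hcpF : ∀ α, α ∈ Φ → α ∉ T → corprime α = cor α := fun α h1 h2 => (hcorprime α h1).2 h2
  have hTneg' : ∀ α, α ∉ T → -α ∉ T := by
    intro α h2 h3
    exact h2 (by simpa using hTneg _ h3)
  -- the identities for the reflections
  have idX : ∀ α ∈ Φ, ∀ x : X, x - p x (corprime α) • prime α = x - p x (cor α) • α := by
    intro α hα x
    by_cases hT : α ∈ T
    · rw [hcpT α hα hT]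
      congr 1
      rw [map_smul, smul_eq_mul, mul_comm, mul_smul, hprT α hα hT]
    · rw [hcpF α hα hT, hprF α hα hT]
  have idY : ∀ α ∈ Φ, ∀ y : Y, y - p (prime α) y • corprime α = y - p α y • cor α := by
    intro α hα y
    by_cases hT : α ∈ T
    · congr 1
      have h1 : p α y = 2 * p (prime α) y := by
        conv_lhs => rw [← hprT α hα hT]
        rw [map_smul, LinearMap.smul_apply, smul_eq_mul]
      rw [hcpT α hα hT, smul_smul, h1, mul_comm]
    · rw [hcpF α hα hT, hprF α hα hT]
  have prime_neg : ∀ δ ∈ Φ, prime (-δ) = -prime δ := by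
    intro δ hδ
    have hnδ : -δ ∈ Φ := (MRD.neg_mem hpair hrefl hδ).1
    by_cases hT : δ ∈ T
    · have hnT : -δ ∈ T := hTneg δ hT
      apply cancel2X
      rw [hprT _ hnδ hnT, smul_neg, hprT _ hδ hT]
    · have hnT : -δ ∉ T := hTneg' δ hT
      rw [hprF _ hnδ hnT, hprF _ hδ hT]
  have prime_inj : ∀ α ∈ Φ, ∀ β ∈ Φ, prime α = prime β → α = β := by
    intro α hα β hβ h
    by_cases hTα : α ∈ T <;> by_cases hTβ : β ∈ T
    · rw [← hprT α hα hTα, ← hprT β hβ hTβ, h]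
    · exfalso
      have h2 : (2:ℤ) • β = α := by
        rw [← hprT α hα hTα, h, hprF β hβ hTβ]
      exact MRD.not_two_smul hpair hred htfX hα hβ h2
    · exfalso
      have h2 : (2:ℤ) • α = β := by
        rw [← hprT β hβ hTβ, ← h, hprF α hα hTα]
      exact MRD.not_two_smul hpair hred htfX hβ hα h2
    · rw [← hprF α hα hTα, h, hprF β hβ hTβ]
  have corprime_mixed : ∀ α ∈ Φ, ∀ β ∈ Φ, α ∈ T → β ∉ T →
      corprime α = corprime β → False := by
    intro α hα β hβ hTα hTβ h
    rw [hcpT α hα hTα, hcpF β hβ hTβ] at h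
    have hpβα : p β (cor α) = 1 := by
      have h2 := hpair β hβ
      rw [← h, map_smul, smul_eq_mul] at h2
      omega
    have hpαβ : p α (cor β) = 4 := by
      rw [← h, map_smul, smul_eq_mul, hpair α hα]
      norm_num
    obtain ⟨γ, hγ, hγ1, hγ2⟩ := hrefl β hβ α hα
    rw [hpαβ] at hγ1
    rw [hpβα, one_smul] at hγ2
    have hnegmem := MRD.neg_mem hpair hrefl hα
    have hcγ : cor γ = -cor α := by
      rw [← hγ2, ← h, two_smul]
      abel
    have hγeq : γ = -α := hcorinj γ hγ (-α) hnegmem.1 (by rw [hcγ, hnegmem.2])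
    have h4 : α - (4:ℤ) • β = -α := by rw [hγ1, hγeq]
    have h6 : α - (4:ℤ) • β + α = 0 := by rw [h4]; abel
    have h5 : (2:ℤ) • α = (4:ℤ) • β := by
      calc (2:ℤ) • α = (α - (4:ℤ) • β + α) + (4:ℤ) • β := by rw [two_smul]; abel
        _ = (4:ℤ) • β := by rw [h6, zero_add]
    have h7 : (2:ℤ) • ((2:ℤ) • β) = (4:ℤ) • β := by rw [smul_smul]; norm_num
    have h8 : α = (2:ℤ) • β := cancel2X _ _ (h5.trans h7.symm)
    exact MRD.not_two_smul hpair hred htfX hα hβ h8.symm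
  have corprime_inj : ∀ α ∈ Φ, ∀ β ∈ Φ, corprime α = corprime β → α = β := by
    intro α hα β hβ h
    by_cases hTα : α ∈ T <;> by_cases hTβ : β ∈ T
    · rw [hcpT α hα hTα, hcpT β hβ hTβ] at h
      exact hcorinj α hα β hβ (cancel2Y _ _ h)
    · exact absurd (corprime_mixed α hα β hβ hTα hTβ h) not_false
    · exact absurd (corprime_mixed β hβ α hα hTβ hTα h.symm) not_false
    · rw [hcpF α hα hTα, hcpF β hβ hTβ] at h
      exact hcorinj α hα β hβ h
  refine ⟨?_, ?_, ?_, ?_, idY, idX, ?_, ?_⟩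
  · -- pairing = 2
    intro α hα
    by_cases hT : α ∈ T
    · have hp : p ((2:ℤ) • prime α) (cor α) = 2 := by
        rw [hprT α hα hT]; exact hpair α hα
      simp only [map_smul, LinearMap.smul_apply, smul_eq_mul] at hp
      rw [hcpT α hα hT, map_smul, smul_eq_mul]
      linarith
    · rw [hcpF α hα hT, hprF α hα hT]
      exact hpair α hα
  · -- injectivity iff
    intro α hα β hβ
    constructor
    · intro h
      rw [prime_inj α hα β hβ h]
    · intro h
      rw [corprime_inj α hα β hβ h]
  · -- reflections stabilize
    intro α hα β hβ
    obtain ⟨γ, hγ, h1, h2⟩ := hrefl α hα β hβ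
    have hTiff : (β ∈ T → γ ∈ T) ∧ (β ∉ T → γ ∉ T) := by
      constructor
      · intro hTβ
        have := hTW α hα β hTβ
        rwa [h1] at this
      · intro hTβ hTγ
        apply hTβ
        have hmem := hTW α hα γ hTγ
        have hpγ : p γ (cor α) = - p β (cor α) := by
          rw [← h1]
          simp only [map_sub, map_smul, LinearMap.sub_apply, LinearMap.smul_apply,
            smul_eq_mul, hpair α hα]
          ring
        have hβeq : γ - p γ (cor α) • α = β := by
          rw [hpγ, ← h1, neg_smul]
          abel
        rwa [hβeq] at hmem
    refine ⟨γ, hγ, ?_, ?_⟩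
    · rw [idX α hα (prime β)]
      by_cases hTβ : β ∈ T
      · have hγT : γ ∈ T := hTiff.1 hTβ
        apply cancel2X
        have hc : p β (cor α) = 2 * p (prime β) (cor α) := by
          conv_lhs => rw [← hprT β hβ hTβ]
          rw [map_smul, LinearMap.smul_apply, smul_eq_mul]
        calc (2:ℤ) • (prime β - p (prime β) (cor α) • α)
            = (2:ℤ) • prime β - (2 * p (prime β) (cor α)) • α := by
              rw [smul_sub, smul_smul]
          _ = β - p β (cor α) • α := by rw [hprT β hβ hTβ, hc]
          _ = γ := h1
          _ = (2:ℤ) • prime γ := (hprT γ hγ hγT).symm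
      · have hγF : γ ∉ T := hTiff.2 hTβ
        rw [hprF β hβ hTβ, hprF γ hγ hγF]
        exact h1
    · rw [idY α hα (corprime β)]
      by_cases hTβ : β ∈ T
      · have hγT : γ ∈ T := hTiff.1 hTβ
        rw [hcpT β hβ hTβ, hcpT γ hγ hγT]
        calc (2:ℤ) • cor β - p α ((2:ℤ) • cor β) • cor α
            = (2:ℤ) • cor β - (2:ℤ) • (p α (cor β) • cor α) := by
              rw [map_smul, smul_eq_mul, mul_smul]
          _ = (2:ℤ) • (cor β - p α (cor β) • cor α) := by rw [smul_sub]
          _ = (2:ℤ) • cor γ := by rw [h2]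
      · have hγF : γ ∉ T := hTiff.2 hTβ
        rw [hcpF β hβ hTβ, hcpF γ hγ hγF]
        exact h2
  · -- reducedness
    rintro α hα β hβ ⟨n, m, hm0, hrel⟩
    have h2 : (2:ℤ) • (m • prime β) = (2:ℤ) • (n • prime α) := by rw [hrel]
    rw [smul_comm (2:ℤ) m, smul_comm (2:ℤ) n] at h2
    have key : ∃ m' n' : ℤ, m' ≠ 0 ∧ m' • β = n' • α := by
      by_cases hTβ : β ∈ T <;> by_cases hTα : α ∈ T
      · rw [hprT β hβ hTβ, hprT α hα hTα] at h2
        exact ⟨m, n, hm0, h2⟩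
      · rw [hprT β hβ hTβ, hprF α hα hTα] at h2
        exact ⟨m, n*2, hm0, by rw [h2, smul_smul]⟩
      · rw [hprF β hβ hTβ, hprT α hα hTα] at h2
        exact ⟨m*2, n, mul_ne_zero hm0 two_ne_zero, by rw [← smul_smul]; exact h2⟩
      · rw [hprF β hβ hTβ, hprF α hα hTα] at h2
        exact ⟨m*2, n*2, mul_ne_zero hm0 two_ne_zero, by
          rw [← smul_smul, ← smul_smul]; exact h2⟩
    obtain ⟨m', n', hm'0, hrel'⟩ := key
    rcases hred α hα β hβ ⟨n', m', hm'0, hrel'⟩ with h | h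
    · left; rw [h]
    · right; rw [h, prime_neg α hα]
  · -- Weyl groups agree
    have hset : {e : AddAut Y | ∃ α ∈ Φ, ∀ y : Y, e y = y - p α y • cor α}
        = {e : AddAut Y | ∃ α ∈ Φ, ∀ y : Y, e y = y - p (prime α) y • corprime α} := by
      ext e
      constructor
      · rintro ⟨α, hα, h⟩
        exact ⟨α, hα, fun y => (h y).trans (idY α hα y).symm⟩
      · rintro ⟨α, hα, h⟩
        exact ⟨α, hα, fun y => (h y).trans (idY α hα y)⟩
    rw [hset]
  · -- positive systems
    intro P hP
    obtain ⟨f, hf, hPdef⟩ := hP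
    have hfT : ∀ α, α ∈ Φ → α ∈ T → f α = 2 * f (prime α) := by
      intro α hα hT
      conv_lhs => rw [← hprT α hα hT]
      rw [map_zsmul, zsmul_eq_mul]
      norm_num
    have hPiff : ∀ δ, δ ∈ P ↔ δ ∈ Φ ∧ 0 < f δ := by
      intro δ
      rw [hPdef]
      simp [Set.mem_setOf_eq]
    have hfprime_pos : ∀ δ, δ ∈ Φ → (0 < f (prime δ) ↔ 0 < f δ) := by
      intro δ hδ
      by_cases hT : δ ∈ T
      · have := hfT δ hδ hT
        constructor <;> intro h <;> linarith
      · rw [hprF δ hδ hT]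
    constructor
    · -- IsPositiveSystem for the image
      refine ⟨f, ?_, ?_⟩
      · rintro x ⟨δ, hδ, rfl⟩
        have hδΦ : δ ∈ Φ := hδ
        by_cases hT : δ ∈ T
        · have h1 := hfT δ hδΦ hT
          intro h0
          exact hf δ hδ (by rw [h1, h0, mul_zero])
        · rw [hprF δ hδΦ hT]
          exact hf δ hδ
      · ext x
        simp only [Set.mem_image, Set.mem_setOf_eq]
        constructor
        · rintro ⟨δ, hδP, rfl⟩
          obtain ⟨hδΦ, hδf⟩ := (hPiff δ).mp hδP
          exact ⟨⟨δ, Finset.mem_coe.mpr hδΦ, rfl⟩, (hfprime_pos δ hδΦ).mpr hδf⟩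
        · rintro ⟨⟨δ, hδΦ, rfl⟩, hpos⟩
          exact ⟨δ, (hPiff δ).mpr ⟨Finset.mem_coe.mp hδΦ,
            (hfprime_pos δ (Finset.mem_coe.mp hδΦ)).mp hpos⟩, rfl⟩
    · -- simple roots correspond
      have fwd : ∀ α ∈ P, ∀ β ∈ P, ∀ γ ∈ P, α = β + γ →
          ∃ β₁ ∈ P, ∃ γ₁ ∈ P, prime α = prime β₁ + prime γ₁ := by
        intro α hαP β hβP γ hγP hsum
        obtain ⟨hαΦ, hαf⟩ := (hPiff α).mp hαP
        obtain ⟨hβΦ, hβf⟩ := (hPiff β).mp hβP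
        obtain ⟨hγΦ, hγf⟩ := (hPiff γ).mp hγP
        have mixed : ∀ β₁ γ₁, β₁ ∈ P → γ₁ ∈ P → β₁ ∈ T → γ₁ ∉ T → α = β₁ + γ₁ →
            ∃ β₂ ∈ P, ∃ γ₂ ∈ P, prime α = prime β₂ + prime γ₂ := by
          intro β₁ γ₁ hβ₁P hγ₁P hβ₁T hγ₁T hsum₁
          obtain ⟨hβ₁Φ, hβ₁f⟩ := (hPiff β₁).mp hβ₁P
          obtain ⟨hγ₁Φ, hγ₁f⟩ := (hPiff γ₁).mp hγ₁P
          by_cases hαT : α ∈ T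
          · exfalso
            obtain ⟨u, hu⟩ := hT2 α hαT
            obtain ⟨v, hv⟩ := hT2 β₁ hβ₁T
            refine MRD.sum2X_false hpair hrefl hred htfX hαΦ hβ₁Φ hγ₁Φ ⟨v, hv⟩
              ⟨u - v, ?_⟩ hsum₁
            rw [smul_sub, ← hu, ← hv, hsum₁]
            abel
          · have ha := MRD.caseC5 hpair hrefl hred htfX hαΦ hβ₁Φ hγ₁Φ (hT2 β₁ hβ₁T)
              (by rintro rfl; exact hγ₁T hβ₁T) hsum₁
            have hδT : β₁ + (2:ℤ) • γ₁ ∈ T := by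
              have hmem := hTW γ₁ hγ₁Φ β₁ hβ₁T
              rw [ha] at hmem
              have heq2 : β₁ - (-2:ℤ) • γ₁ = β₁ + (2:ℤ) • γ₁ := by
                rw [neg_smul]; abel
              rwa [heq2] at hmem
            have hδΦ : β₁ + (2:ℤ) • γ₁ ∈ Φ := hTsub hδT
            have hδf : 0 < f (β₁ + (2:ℤ) • γ₁) := by
              have hval : f (β₁ + (2:ℤ) • γ₁) = f β₁ + 2 * f γ₁ := by
                rw [map_add, map_zsmul, zsmul_eq_mul]
                norm_num
              rw [hval]; linarith
            refine ⟨β₁, hβ₁P, β₁ + (2:ℤ) • γ₁, (hPiff _).mpr ⟨hδΦ, hδf⟩, ?_⟩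
            apply cancel2X
            rw [smul_add, hprF α hαΦ hαT, hprT _ hβ₁Φ hβ₁T, hprT _ hδΦ hδT, hsum₁]
            module
        by_cases hβT : β ∈ T <;> by_cases hγT : γ ∈ T
        · exact absurd (MRD.sum2X_false hpair hrefl hred htfX hαΦ hβΦ hγΦ
            (hT2 β hβT) (hT2 γ hγT) hsum) not_false
        · exact mixed β γ hβP hγP hβT hγT hsum
        · exact mixed γ β hγP hβP hγT hβT (by rw [hsum, add_comm])
        · by_cases hαT : α ∈ T
          · have hpa := MRD.caseC3 hpair hrefl hred htfX hαΦ hβΦ hγΦ (hT2 α hαT) hsum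
            have hδT : γ - β ∈ T := by
              have hmem := hTW β hβΦ α hαT
              rw [hpa] at hmem
              have heq2 : α - (2:ℤ) • β = γ - β := by rw [hsum, two_smul]; abel
              rwa [heq2] at hmem
            have hδΦ : γ - β ∈ Φ := hTsub hδT
            rcases lt_trichotomy (f (γ - β)) 0 with hs | hs | hs
            · have hδ'T : β - γ ∈ T := by
                have := hTneg _ hδT
                rwa [neg_sub] at this
              have hδ'Φ : β - γ ∈ Φ := hTsub hδ'T
              have hδ'f : 0 < f (β - γ) := by
                have hval : f (β - γ) = - f (γ - β) := by rw [← map_neg, neg_sub]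
                rw [hval]; linarith
              refine ⟨γ, hγP, β - γ, (hPiff _).mpr ⟨hδ'Φ, hδ'f⟩, ?_⟩
              apply cancel2X
              rw [smul_add, hprT α hαΦ hαT, hprF γ hγΦ hγT, hprT _ hδ'Φ hδ'T, hsum]
              module
            · exact absurd hs (hf (γ - β) (Finset.mem_coe.mpr hδΦ))
            · refine ⟨β, hβP, γ - β, (hPiff _).mpr ⟨hδΦ, hs⟩, ?_⟩
              apply cancel2X
              rw [smul_add, hprT α hαΦ hαT, hprF β hβΦ hβT, hprT _ hδΦ hδT, hsum]
              module
          · exact ⟨β, hβP, γ, hγP, by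
              rw [hprF α hαΦ hαT, hprF β hβΦ hβT, hprF γ hγΦ hγT]; exact hsum⟩
      have bwd : ∀ α ∈ P, ∀ β ∈ P, ∀ γ ∈ P, prime α = prime β + prime γ →
          ∃ β₁ ∈ P, ∃ γ₁ ∈ P, α = β₁ + γ₁ := by
        intro α hαP β hβP γ hγP heq
        obtain ⟨hαΦ, hαf⟩ := (hPiff α).mp hαP
        obtain ⟨hβΦ, hβf⟩ := (hPiff β).mp hβP
        obtain ⟨hγΦ, hγf⟩ := (hPiff γ).mp hγP
        have hdbl : (2:ℤ) • prime α = (2:ℤ) • prime β + (2:ℤ) • prime γ := by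
          rw [heq, smul_add]
        have hmixT : ∀ β₁ γ₁, β₁ ∈ P → γ₁ ∈ P → β₁ ∈ T → γ₁ ∉ T → α ∈ T →
            α = β₁ + (2:ℤ) • γ₁ → ∃ β₂ ∈ P, ∃ γ₂ ∈ P, α = β₂ + γ₂ := by
          intro β₁ γ₁ hβ₁P hγ₁P hβ₁T hγ₁T hαT heq₁
          obtain ⟨hβ₁Φ, hβ₁f⟩ := (hPiff β₁).mp hβ₁P
          obtain ⟨hγ₁Φ, hγ₁f⟩ := (hPiff γ₁).mp hγ₁P
          have hb := MRD.caseD2 hpair hrefl hred htfX hαΦ hβ₁Φ hγ₁Φ (hT2 β₁ hβ₁T)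
            (by rintro rfl; exact hγ₁T hβ₁T) (by rintro rfl; exact hγ₁T hαT) heq₁
          have hmem := (MRD.srefl hrefl hβ₁Φ hγ₁Φ).1
          rw [hb] at hmem
          have heq2 : γ₁ - (-1:ℤ) • β₁ = γ₁ + β₁ := by rw [neg_smul, one_smul]; abel
          rw [heq2] at hmem
          have hsumf : 0 < f (γ₁ + β₁) := by rw [map_add]; linarith
          exact ⟨γ₁ + β₁, (hPiff _).mpr ⟨hmem, hsumf⟩, γ₁, hγ₁P, by
            rw [heq₁, two_smul]; abel⟩
        by_cases hαT : α ∈ T <;> by_cases hβT : β ∈ T <;> by_cases hγT : γ ∈ T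
        · rw [hprT α hαΦ hαT, hprT β hβΦ hβT, hprT γ hγΦ hγT] at hdbl
          exact ⟨β, hβP, γ, hγP, hdbl⟩
        · rw [hprT α hαΦ hαT, hprT β hβΦ hβT, hprF γ hγΦ hγT] at hdbl
          exact hmixT β γ hβP hγP hβT hγT hαT hdbl
        · rw [hprT α hαΦ hαT, hprF β hβΦ hβT, hprT γ hγΦ hγT] at hdbl
          exact hmixT γ β hγP hβP hγT hβT hαT (by rw [hdbl]; abel)
        · rw [hprT α hαΦ hαT, hprF β hβΦ hβT, hprF γ hγΦ hγT] at hdbl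
          exact absurd (MRD.caseD3 hpair hrefl hred htfX hαΦ hβΦ hγΦ hdbl) not_false
        · rw [hprF α hαΦ hαT, hprT β hβΦ hβT, hprT γ hγΦ hγT] at hdbl
          have hpa := MRD.caseD4 hpair hrefl hred htfX hαΦ hβΦ hγΦ (hT2 β hβT)
            (hT2 γ hγT) (by rintro rfl; exact hαT hβT) hdbl
          have hδΦ : α - β ∈ Φ := by
            have hmem := (MRD.srefl hrefl hβΦ hαΦ).1
            rwa [hpa, one_smul] at hmem
          rcases lt_trichotomy (f (α - β)) 0 with hs | hs | hs
          · have hδ'Φ : β - α ∈ Φ := by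
              have := (MRD.neg_mem hpair hrefl hδΦ).1
              rwa [neg_sub] at this
            have hδ'f : 0 < f (β - α) := by
              have hval : f (β - α) = - f (α - β) := by rw [← map_neg, neg_sub]
              rw [hval]; linarith
            refine ⟨γ, hγP, β - α, (hPiff _).mpr ⟨hδ'Φ, hδ'f⟩, ?_⟩
            have hfin : γ + (β - α) = α := by
              calc γ + (β - α) = (β + γ) - α := by abel
                _ = (2:ℤ) • α - α := by rw [← hdbl]
                _ = α := by rw [two_smul]; abel
            exact hfin.symm
          · exact absurd hs (hf (α - β) (Finset.mem_coe.mpr hδΦ))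
          · exact ⟨β, hβP, α - β, (hPiff _).mpr ⟨hδΦ, hs⟩, by abel⟩
        · rw [hprF α hαΦ hαT, hprT β hβΦ hβT, hprF γ hγΦ hγT] at hdbl
          exact absurd (MRD.caseD5 hpair hrefl hred htfX hαΦ hβΦ hγΦ (hT2 β hβT)
            (by rintro rfl; exact hγT hβT) hdbl) not_false
        · rw [hprF α hαΦ hαT, hprF β hβΦ hβT, hprT γ hγΦ hγT] at hdbl
          exact absurd (MRD.caseD5 hpair hrefl hred htfX hαΦ hγΦ hβΦ (hT2 γ hγT)
            (by rintro rfl; exact hβT hγT) (by rw [hdbl]; abel)) not_false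
        · rw [hprF α hαΦ hαT, hprF β hβΦ hβT, hprF γ hγΦ hγT] at heq
          exact ⟨β, hβP, γ, hγP, heq⟩
      ext x
      simp only [simpleRoots, Set.mem_image, Set.mem_setOf_eq]
      constructor
      · rintro ⟨α, ⟨hαP, hnd⟩, rfl⟩
        refine ⟨⟨α, hαP, rfl⟩, ?_⟩
        rintro ⟨b, ⟨β, hβP, rfl⟩, c, ⟨γ, hγP, rfl⟩, heq⟩
        obtain ⟨β₁, hβ₁, γ₁, hγ₁, h⟩ := bwd α hαP β hβP γ hγP heq
        exact hnd ⟨β₁, hβ₁, γ₁, hγ₁, h⟩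
      · rintro ⟨⟨α, hαP, rfl⟩, hnd⟩
        refine ⟨α, ⟨hαP, ?_⟩, rfl⟩
        rintro ⟨β, hβP, γ, hγP, heq⟩
        obtain ⟨β₁, hβ₁, γ₁, hγ₁, h⟩ := fwd α hαP β hβP γ hγP heq
        exact hnd ⟨prime β₁, ⟨β₁, hβ₁, rfl⟩, prime γ₁, ⟨γ₁, hγ₁, rfl⟩, h⟩


end
end

section
/- Let q₁, q₀, q₁′, q₀′ be real numbers > 1, c ∈ {1, −1}, c′ ∈ ℂ∖{0}, k ∈ ℤ, n a positive integer, and b′ ∈ ℂ[T, T⁻¹]. Suppose that in ℂ[T, T⁻¹] one has the identity c·c′·T^k·((q₁′ − 1) + √q₁′·(√q₀′ − 1/√q₀′)·T⁻¹)·Q_n + c·b′·(T^n − T^{−n}) = c·(q₁ − 1)·T^n + √q₁·(√q₀ − 1/√q₀). Then n = 1, and moreover: if k is even, then c·c′·(q₁′ − 1) = c·(q₁ − 1) and c·c′·√q₁′·(√q₀′ − 1/√q₀′) = √q₁·(√q₀ − 1/√q₀); if k is odd, then c·c′·(q₁′ − 1) = √q₁·(√q₀ − 1/√q₀) and c·c′·√q₁′·(√q₀′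 − 1/√q₀′) = c·(q₁ − 1). -/
noncomputable section

open LaurentPolynomial

/-- For a positive integer `n`, `Q_n := Σ_{j=0}^{n−1} T^{n−2j} ∈ ℂ[T, T⁻¹]`, so that
`(1 − T⁻²)·Q_n = T^n − T^{−n}`. -/
def Qpoly (n : ℕ) : LaurentPolynomial ℂ :=
  ∑ j ∈ Finset.range n, T ((n : ℤ) - 2 * j)

/-- Evaluation of a Laurent polynomial at a unit of `ℂ`. -/
def LBCev (t : ℂˣ) : LaurentPolynomial ℂ →ₐ[ℂ] ℂ :=
  AddMonoidAlgebra.lift ℂ ℂ ℤ ((Units.coeHom ℂ).comp (zpowersHom ℂˣ t))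

@[simp] lemma LBCev_T (t : ℂˣ) (n : ℤ) : LBCev t (T n) = (t : ℂ) ^ n := by
  rw [show T n = (AddMonoidAlgebra.single n 1 : LaurentPolynomial ℂ) from rfl]
  rw [LBCev, AddMonoidAlgebra.lift_single]
  simp [zpowersHom_apply]

@[simp] lemma LBCev_C (t : ℂˣ) (a : ℂ) : LBCev t (C a) = a := by
  rw [C_eq_algebraMap]; exact (LBCev t).commutes a

lemma LBCsum_one (n : ℕ) : ∑ j ∈ Finset.range n, (1:ℂ)^((n:ℤ)-2*(j:ℤ)) = n := by simp

lemma LBCsum_neg_one (n : ℕ) :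
    ∑ j ∈ Finset.range n, (-1:ℂ)^((n:ℤ)-2*(j:ℤ)) = n * (-1:ℂ)^(n:ℤ) := by
  have h : ∀ j ∈ Finset.range n, (-1:ℂ)^((n:ℤ)-2*(j:ℤ)) = (-1:ℂ)^(n:ℤ) := by
    intro j _
    rw [zpow_sub₀ (by norm_num : (-1:ℂ) ≠ 0), zpow_mul]
    norm_num
  rw [Finset.sum_congr rfl h, Finset.sum_const, Finset.card_range, nsmul_eq_mul]

lemma LBCsum_zero (n : ℕ) (z : ℂ) (hz : z ≠ 0) (h2 : z^(2:ℤ) ≠ 1)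
    (h2n : z^(2*(n:ℤ)) = 1) :
    ∑ j ∈ Finset.range n, z^((n:ℤ)-2*(j:ℤ)) = 0 := by
  have hterm : ∀ j ∈ Finset.range n, z^((n:ℤ)-2*(j:ℤ)) = z^(n:ℤ) * (z^(-2:ℤ))^j := by
    intro j _
    rw [sub_eq_add_neg, zpow_add₀ hz, ← zpow_natCast (z^(-2:ℤ)) j, ← zpow_mul]
    ring_nf
  rw [Finset.sum_congr rfl hterm, ← Finset.mul_sum]
  have hr : z^(-2:ℤ) ≠ 1 := by
    intro h
    apply h2
    rw [← inv_inv (z^(2:ℤ)), ← zpow_neg, h, inv_one]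
  rw [geom_sum_eq hr n]
  have hrn : (z^(-2:ℤ))^n = 1 := by
    rw [← zpow_natCast (z^(-2:ℤ)) n, ← zpow_mul,
      show (-2:ℤ)*(n:ℤ) = -(2*(n:ℤ)) by ring, zpow_neg, h2n, inv_one]
  rw [hrn]
  simp

lemma LBCroot2 (n : ℕ) (hn : 2 ≤ n) :
    ∃ z : ℂ, z ≠ 0 ∧ z^(2:ℤ) ≠ 1 ∧ z^(2*(n:ℤ)) = 1 ∧ z^(n:ℤ) = -1 := by
  have hn0 : (n:ℂ) ≠ 0 := Nat.cast_ne_zero.mpr (by omega)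
  have hpi : (Real.pi : ℂ) ≠ 0 := by exact_mod_cast Real.pi_ne_zero
  have h2 : (2 * ↑Real.pi * Complex.I : ℂ) ≠ 0 := by simp [hpi, Complex.I_ne_zero]
  set z : ℂ := Complex.exp (↑Real.pi * Complex.I / n) with hzdef
  have hzn : z^(n:ℤ) = -1 := by
    rw [zpow_natCast, hzdef, ← Complex.exp_nat_mul]
    rw [show (n:ℂ) * (↑Real.pi * Complex.I / n) = ↑Real.pi * Complex.I by field_simp]
    exact Complex.exp_pi_mul_I
  have hz2n : z^(2*(n:ℤ)) = 1 := by
    rw [show 2*(n:ℤ) = (n:ℤ)*2 by ring, zpow_mul, hzn]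
    norm_num
  have hz2 : z^(2:ℤ) ≠ 1 := by
    intro h
    rw [show (2:ℤ) = ((2:ℕ):ℤ) by norm_num, zpow_natCast, hzdef, ← Complex.exp_nat_mul,
      Complex.exp_eq_one_iff] at h
    obtain ⟨m, hm⟩ := h
    have h1 : (m:ℂ) * n = 1 := by
      field_simp at hm
      have key : ((m:ℂ) * n) * (2 * ↑Real.pi * Complex.I)
          = 1 * (2 * ↑Real.pi * Complex.I) := by
        push_cast at hm
        linear_combination (-(↑Real.pi * Complex.I)) * hm
      simpa using mul_right_cancel₀ h2 key
    have h2' : (m * n : ℤ) = 1 := by exact_mod_cast h1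
    have : (n:ℤ) ≤ 1 := Int.le_of_dvd one_pos ⟨m, by linarith⟩
    omega
  exact ⟨z, Complex.exp_ne_zero _, hz2, hz2n, hzn⟩

lemma LBCroot3 (n : ℕ) (hn : 3 ≤ n) :
    ∃ z : ℂ, z ≠ 0 ∧ z^(2:ℤ) ≠ 1 ∧ z^(2*(n:ℤ)) = 1 ∧ z^(n:ℤ) = 1 := by
  have hn0 : (n:ℂ) ≠ 0 := Nat.cast_ne_zero.mpr (by omega)
  have hpi : (Real.pi : ℂ) ≠ 0 := by exact_mod_cast Real.pi_ne_zero
  have h2 : (2 * ↑Real.pi * Complex.I : ℂ) ≠ 0 := by simp [hpi, Complex.I_ne_zero]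
  set z : ℂ := Complex.exp (2 * ↑Real.pi * Complex.I / n) with hzdef
  have hzn : z^(n:ℤ) = 1 := by
    rw [zpow_natCast, hzdef, ← Complex.exp_nat_mul]
    rw [show (n:ℂ) * (2 * ↑Real.pi * Complex.I / n) = 2 * ↑Real.pi * Complex.I by field_simp]
    exact Complex.exp_two_pi_mul_I
  have hz2n : z^(2*(n:ℤ)) = 1 := by
    rw [show 2*(n:ℤ) = (n:ℤ)*2 by ring, zpow_mul, hzn]
    norm_num
  have hz2 : z^(2:ℤ) ≠ 1 := by
    intro h
    rw [show (2:ℤ) = ((2:ℕ):ℤ) by norm_num, zpow_natCast, hzdef, ← Complex.exp_nat_mul,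
      Complex.exp_eq_one_iff] at h
    obtain ⟨m, hm⟩ := h
    have h1 : (m:ℂ) * n = 2 := by
      field_simp at hm
      have key : ((m:ℂ) * n) * (2 * ↑Real.pi * Complex.I)
          = 2 * (2 * ↑Real.pi * Complex.I) := by
        push_cast at hm
        linear_combination (-(2 * ↑Real.pi * Complex.I)) * hm
      simpa using mul_right_cancel₀ h2 key
    have h2' : (m * n : ℤ) = 2 := by exact_mod_cast h1
    have : (n:ℤ) ≤ 2 := Int.le_of_dvd (by norm_num) ⟨m, by linarith⟩
    omega
  exact ⟨z, Complex.exp_ne_zero _, hz2, hz2n, hzn⟩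

/-- Let `q₁, q₀, q₁′, q₀′ > 1` be reals, `c ∈ {1, −1}`, `c′ ≠ 0`, `k ∈ ℤ`, `n` a
positive integer and `b′ ∈ ℂ[T, T⁻¹]`.  If in `ℂ[T, T⁻¹]` one has
`c·c′·T^k·((q₁′−1) + √q₁′·(√q₀′ − 1/√q₀′)·T⁻¹)·Q_n + c·b′·(T^n − T^{−n})
  = c·(q₁−1)·T^n + √q₁·(√q₀ − 1/√q₀)`,
then `n = 1`, and the stated identities between the parameters hold according to the
parity of `k`. -/
theorem laurent_bernstein_comparison
    (q1 q0 q1' q0' : ℝ)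
    (hq1 : 1 < q1) (hq0 : 1 < q0) (hq1' : 1 < q1') (hq0' : 1 < q0')
    (c : ℂ) (hc : c = 1 ∨ c = -1) (c' : ℂ) (hc' : c' ≠ 0)
    (k : ℤ) (n : ℕ) (hn : 0 < n) (b' : LaurentPolynomial ℂ)
    (hid : C (c * c') * T k *
          (C ((q1' : ℂ) - 1)
            + C ((Real.sqrt q1' * (Real.sqrt q0' - 1 / Real.sqrt q0') : ℝ) : ℂ) * T (-1)) *
          Qpoly n
        + C c * b' * (T (n : ℤ) - T (-(n : ℤ)))
      = C (c * ((q1 : ℂ) - 1)) * T (n : ℤ)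
        + C ((Real.sqrt q1 * (Real.sqrt q0 - 1 / Real.sqrt q0) : ℝ) : ℂ)) :
    n = 1 ∧
    (Even k →
      c * c' * ((q1' : ℂ) - 1) = c * ((q1 : ℂ) - 1) ∧
      c * c' * ((Real.sqrt q1' * (Real.sqrt q0' - 1 / Real.sqrt q0') : ℝ) : ℂ)
        = ((Real.sqrt q1 * (Real.sqrt q0 - 1 / Real.sqrt q0) : ℝ) : ℂ)) ∧
    (Odd k →
      c * c' * ((q1' : ℂ) - 1)
        = ((Real.sqrt q1 * (Real.sqrt q0 - 1 / Real.sqrt q0) : ℝ) : ℂ) ∧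
      c * c' * ((Real.sqrt q1' * (Real.sqrt q0' - 1 / Real.sqrt q0') : ℝ) : ℂ)
        = c * ((q1 : ℂ) - 1)) := by
  set A0 : ℂ := ((q1' : ℂ) - 1) with hA0def
  set B0 : ℂ := ((Real.sqrt q1' * (Real.sqrt q0' - 1 / Real.sqrt q0') : ℝ) : ℂ) with hB0def
  set Aq : ℂ := ((q1 : ℂ) - 1) with hAqdef
  set Dq : ℂ := ((Real.sqrt q1 * (Real.sqrt q0 - 1 / Real.sqrt q0) : ℝ) : ℂ) with hDqdef
  -- nonvanishing facts
  have hcne : c ≠ 0 := by rcases hc with h | h <;> simp [h]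
  have hcc' : c * c' ≠ 0 := mul_ne_zero hcne hc'
  have hsq0 : 1 < Real.sqrt q0 := by
    rw [show (1:ℝ) = Real.sqrt 1 by simp]
    exact Real.sqrt_lt_sqrt (by norm_num) hq0
  have hsq0' : 1 < Real.sqrt q0' := by
    rw [show (1:ℝ) = Real.sqrt 1 by simp]
    exact Real.sqrt_lt_sqrt (by norm_num) hq0'
  have hsq1 : 0 < Real.sqrt q1 := Real.sqrt_pos.mpr (by linarith)
  have hsq1' : 0 < Real.sqrt q1' := Real.sqrt_pos.mpr (by linarith)
  have hDpos : 0 < Real.sqrt q1 * (Real.sqrt q0 - 1 / Real.sqrt q0) := by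
    have h1 : 1 / Real.sqrt q0 < 1 := by
      rw [div_lt_one (by linarith)]; linarith
    nlinarith
  have hBpos : 0 < Real.sqrt q1' * (Real.sqrt q0' - 1 / Real.sqrt q0') := by
    have h1 : 1 / Real.sqrt q0' < 1 := by
      rw [div_lt_one (by linarith)]; linarith
    nlinarith
  have hD : Dq ≠ 0 := by
    rw [hDqdef]; exact_mod_cast hDpos.ne'
  have hB0 : B0 ≠ 0 := by
    rw [hB0def]; exact_mod_cast hBpos.ne'
  have hA0 : A0 ≠ 0 := by
    rw [hA0def, sub_ne_zero]
    exact_mod_cast hq1'.ne'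
  -- the key evaluation identity
  have key : ∀ z : ℂ, ∀ hz : z ≠ 0, z ^ (2*(n:ℤ)) = 1 →
      c*c'*z^k * (A0 + B0 * z^(-1:ℤ)) * (∑ j ∈ Finset.range n, z^((n:ℤ)-2*(j:ℤ)))
      = c*Aq*z^(n:ℤ) + Dq := by
    intro z hz h2n
    have h := congrArg (LBCev (Units.mk0 z hz)) hid
    simp only [map_add, map_mul, map_sub, map_sum, LBCev_T, LBCev_C, Qpoly,
      Units.val_mk0] at h
    have hnn : z^(-(n:ℤ)) = z^(n:ℤ) := by
      have hmul : z^(n:ℤ) * z^(n:ℤ) = 1 := by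
        rw [← zpow_add₀ hz, ← two_mul]; exact h2n
      rw [zpow_neg]
      exact inv_eq_of_mul_eq_one_right hmul
    rw [hnn, sub_self, mul_zero, add_zero] at h
    exact h
  -- evaluations at 1 and -1
  have E1 : c*c'*(A0 + B0) * n = c*Aq + Dq := by
    have h := key 1 one_ne_zero (one_zpow _)
    rw [LBCsum_one] at h
    simpa using h
  have E2 : c*c'*(-1:ℂ)^k*(A0 - B0) * ((n:ℂ) * (-1:ℂ)^(n:ℤ))
      = c*Aq*(-1:ℂ)^(n:ℤ) + Dq := by
    have h := key (-1) (by norm_num) (by rw [zpow_mul]; norm_num)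
    rw [LBCsum_neg_one] at h
    rw [show ((-1:ℂ))^(-1:ℤ) = -1 by norm_num] at h
    linear_combination h
  obtain rfl | rfl | hn3 : n = 1 ∨ n = 2 ∨ 3 ≤ n := by omega
  · -- n = 1
    have hpow : ((-1:ℂ))^((1:ℕ):ℤ) = -1 := by norm_num
    rw [hpow] at E2
    norm_num at E1 E2
    refine ⟨rfl, ?_, ?_⟩
    · intro hk
      have hk1 : (-1:ℂ)^k = 1 := hk.neg_one_zpow
      rw [hk1] at E2
      constructor
      · linear_combination (E1 - E2) / 2
      · linear_combination (E1 + E2) / 2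
    · intro hk
      have hk1 : (-1:ℂ)^k = -1 := hk.neg_one_zpow
      rw [hk1] at E2
      constructor
      · linear_combination (E1 + E2) / 2
      · linear_combination (E1 - E2) / 2
  · -- n = 2 : contradiction
    exfalso
    have hpow : ((-1:ℂ))^((2:ℕ):ℤ) = 1 := by norm_num
    rw [hpow] at E2
    norm_num at E1 E2
    rcases Int.even_or_odd k with hk | hk
    · have hk1 : (-1:ℂ)^k = 1 := hk.neg_one_zpow
      rw [hk1] at E2
      have : c * c' * B0 = 0 := by linear_combination (E1 - E2) / 4
      exact hB0 (by
        have := mul_eq_zero.mp this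
        tauto)
    · have hk1 : (-1:ℂ)^k = -1 := hk.neg_one_zpow
      rw [hk1] at E2
      have : c * c' * A0 = 0 := by linear_combination (E1 - E2) / 4
      exact hA0 (by
        have := mul_eq_zero.mp this
        tauto)
  · -- n ≥ 3 : contradiction
    exfalso
    obtain ⟨z, hz0, hz2, hz2n, hzn⟩ := LBCroot2 n (by omega)
    obtain ⟨w, hw0, hw2, hw2n, hwn⟩ := LBCroot3 n hn3
    have E3 := key z hz0 hz2n
    have E4 := key w hw0 hw2n
    rw [LBCsum_zero n z hz0 hz2 hz2n, hzn] at E3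
    rw [LBCsum_zero n w hw0 hw2 hw2n, hwn] at E4
    apply hD
    linear_combination -(E3 + E4) / 2

end
end

section
/- There do not exist real numbers q₁, q₀, q₁′ > 1, c ∈ {1, −1}, c′ ∈ ℂ∖{0}, b′ ∈ ℂ[T, T⁻¹], an integer K and a positive integer N with K odd or N odd, such that in ℂ[T, T⁻¹] one has c·c′·(q₁′ − 1)·T^K·Q_N + c·b′·(T^N − T^{−N}) = c·(q₁ − 1)·T^N + √q₁·(√q₀ − 1/√q₀). -/
noncomputable section

open LaurentPolynomial

/-- Evaluation of a Laurent polynomial at a unit `t`. -/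
noncomputable def evU (t : ℂˣ) : LaurentPolynomial ℂ →ₐ[ℂ] ℂ :=
  AddMonoidAlgebra.lift ℂ ℂ ℤ ((Units.coeHom ℂ).comp (zpowersHom ℂˣ t))

lemma evU_T (t : ℂˣ) (n : ℤ) : evU t (T n) = (t : ℂ) ^ n := by
  rw [evU, T, AddMonoidAlgebra.lift_single]
  simp [zpowersHom_apply]

lemma evU_C (t : ℂˣ) (a : ℂ) : evU t (LaurentPolynomial.C a) = a := by
  have h : (LaurentPolynomial.C a : LaurentPolynomial ℂ) = AddMonoidAlgebra.single 0 a := rfl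
  rw [evU, h, AddMonoidAlgebra.lift_single]
  simp

lemma neg_one_zpow_sub_two_mul (m j : ℤ) : (-1 : ℂ) ^ (m - 2 * j) = (-1 : ℂ) ^ m := by
  rcases Int.even_or_odd m with ⟨k, hk⟩ | ⟨k, hk⟩
  · rw [Even.neg_one_zpow ⟨k - j, by omega⟩, Even.neg_one_zpow ⟨k, by omega⟩]
  · rw [Odd.neg_one_zpow ⟨k - j, by omega⟩, Odd.neg_one_zpow ⟨k, by omega⟩]

/-- There do not exist real numbers `q₁, q₀, q₁′ > 1`, `c ∈ {1, −1}`, `c′ ≠ 0`,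
`b′ ∈ ℂ[T, T⁻¹]`, an integer `K` and a positive integer `N` with `K` odd or `N` odd,
such that in `ℂ[T, T⁻¹]` one has
`c·c′·(q₁′−1)·T^K·Q_N + c·b′·(T^N − T^{−N}) = c·(q₁−1)·T^N + √q₁·(√q₀ − 1/√q₀)`. -/
theorem laurent_no_half_integer_identity
    (q1 q0 q1' : ℝ) (hq1 : 1 < q1) (hq0 : 1 < q0) (hq1' : 1 < q1')
    (c : ℂ) (hc : c = 1 ∨ c = -1) (c' : ℂ) (hc' : c' ≠ 0)
    (b' : LaurentPolynomial ℂ)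
    (K : ℤ) (N : ℕ) (hN : 0 < N) (hpar : Odd K ∨ Odd (N : ℤ))
    (hid : C (c * c' * ((q1' : ℂ) - 1)) * T K * Qpoly N
        + C c * b' * (T (N : ℤ) - T (-(N : ℤ)))
      = C (c * ((q1 : ℂ) - 1)) * T (N : ℤ)
        + C ((Real.sqrt q1 * (Real.sqrt q0 - 1 / Real.sqrt q0) : ℝ) : ℂ)) :
    False := by
  set s : ℂ := ((Real.sqrt q1 * (Real.sqrt q0 - 1 / Real.sqrt q0) : ℝ) : ℂ) with hs_def
  -- s is a nonzero (in fact positive real) constant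
  have hsq0 : 1 < Real.sqrt q0 := by
    rw [show (1:ℝ) = Real.sqrt 1 by simp]
    exact Real.sqrt_lt_sqrt (by norm_num) hq0
  have hsq1 : 0 < Real.sqrt q1 := Real.sqrt_pos.mpr (by linarith)
  have hsR : 0 < Real.sqrt q1 * (Real.sqrt q0 - 1 / Real.sqrt q0) := by
    have : 1 / Real.sqrt q0 < 1 := by
      rw [div_lt_one (by linarith)]; exact hsq0
    nlinarith
  have hs : s ≠ 0 := by
    simp only [hs_def, ne_eq, Complex.ofReal_eq_zero]
    exact ne_of_gt hsR
  have hcne : c ≠ 0 := by rcases hc with h | h <;> simp [h]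
  have hq1c : (q1 : ℂ) - 1 ≠ 0 := by
    simp only [ne_eq, sub_eq_zero]
    exact_mod_cast ne_of_gt hq1
  have hq1'c : (q1' : ℂ) - 1 ≠ 0 := by
    simp only [ne_eq, sub_eq_zero]
    exact_mod_cast ne_of_gt hq1'
  have hNc : (N : ℂ) ≠ 0 := Nat.cast_ne_zero.mpr hN.ne'
  -- evaluate at T = 1
  have E1 := congrArg (evU 1) hid
  simp only [map_add, map_mul, map_sub, evU_T, evU_C, Qpoly, map_sum, Units.val_one,
    one_zpow, Finset.sum_const, Finset.card_range, nsmul_eq_mul, mul_one, sub_self,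
    mul_zero, add_zero] at E1
  -- evaluate at T = -1
  have E2 := congrArg (evU (-1)) hid
  simp only [map_add, map_mul, map_sub, evU_T, evU_C, Qpoly, map_sum, Units.val_neg,
    Units.val_one, neg_one_zpow_sub_two_mul, Finset.sum_const, Finset.card_range,
    nsmul_eq_mul, zpow_neg] at E2
  have hNN : ((-1 : ℂ) ^ (N : ℤ))⁻¹ = (-1 : ℂ) ^ (N : ℤ) := by
    rcases Int.even_or_odd (N : ℤ) with h | h
    · rw [h.neg_one_zpow]; norm_num
    · rw [h.neg_one_zpow]; norm_num
  rw [hNN, sub_self, mul_zero, add_zero] at E2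
  rcases Int.even_or_odd (N : ℤ) with hNe | hNo
  · -- N even ⇒ K odd
    have hK : Odd K := by
      rcases hpar with h | h
      · exact h
      · exact absurd h (Int.not_odd_iff_even.mpr hNe)
    rw [hK.neg_one_zpow, hNe.neg_one_zpow] at E2
    have : c * c' * ((q1' : ℂ) - 1) * (N : ℂ) = 0 := by linear_combination (E1 - E2) / 2
    exact (mul_ne_zero (mul_ne_zero (mul_ne_zero hcne hc') hq1'c) hNc) this
  · rcases Int.even_or_odd K with hKe | hKo
    · -- K even, N odd : forces s = 0
      rw [hKe.neg_one_zpow, hNo.neg_one_zpow] at E2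
      exact hs (by linear_combination -(E1 + E2) / 2)
    · -- K odd, N odd : forces c*(q1-1) = 0
      rw [hKo.neg_one_zpow, hNo.neg_one_zpow] at E2
      have : c * ((q1 : ℂ) - 1) = 0 := by linear_combination (E2 - E1) / 2
      exact (mul_ne_zero hcne hq1c) this

end
end

section
/- Let H be a rank-one affine Hecke algebra with data (Y, α, α∨, q₁, q₀) and element T_s. Then (θ_{−α∨}·T_s)² = −√q₁·(√q₀ − 1/√q₀)·(θ_{−α∨}·T_s) + q₁·1, and the element T_{s,0} := √(q₀/q₁)·(θ_{α∨}·T_s − (q₁ − 1)·θ_{α∨}) satisfies the quadratic relation T_{s,0}² = (q₀ − 1)·T_{s,0} + q₀·1. -/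
noncomputable section

/-- A rank-one affine Hecke algebra with data `(Y, α, α∨, q₁, q₀)`:
`Y` is a finitely generated free `ℤ`-module, `α : Y → ℤ` is linear, `α∨ ∈ Y` with
`α(α∨) = 2`, `q₁, q₀ > 1` are real numbers with `q₁ = q₀` unless `α(y)` is even for
every `y`.  The algebra `H` is a unital `ℂ`-algebra containing the group algebra
`ℂ[Y]` (embedded via `emb`) as a unital subalgebra, together with an element `Ts`,
such that `H` is free as a left `ℂ[Y]`-module with basis `{1, Ts}`, `Ts` satisfies the
quadratic relation, and the Bernstein relations hold. -/
structure RankOneAffineHecke (Y : Type*) [AddCommGroup Y]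
    (H : Type*) [Ring H] [Algebra ℂ H] where
  /-- `Y` is a free `ℤ`-module. -/
  free : Module.Free ℤ Y
  /-- `Y` is a finitely generated `ℤ`-module. -/
  finite : Module.Finite ℤ Y
  /-- the root `α`, viewed as a linear functional on `Y` -/
  root : Y →+ ℤ
  /-- the coroot `α∨ ∈ Y` -/
  coroot : Y
  root_coroot : root coroot = 2
  /-- the parameter `q₁` -/
  q1 : ℝ
  /-- the parameter `q₀` -/
  q0 : ℝ
  one_lt_q1 : 1 < q1
  one_lt_q0 : 1 < q0
  q1_eq_q0 : (¬ ∀ y : Y, Even (root y)) → q1 = q0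
  /-- the embedding of the group algebra `ℂ[Y]` into `H` -/
  emb : AddMonoidAlgebra ℂ Y →ₐ[ℂ] H
  emb_injective : Function.Injective emb
  /-- the standard generator `T_s` -/
  Ts : H
  /-- `H` is free as a left `ℂ[Y]`-module with basis `{1, Ts}`. -/
  free_module : ∀ h : H, ∃! p : AddMonoidAlgebra ℂ Y × AddMonoidAlgebra ℂ Y,
    h = emb p.1 + emb p.2 * Ts
  /-- the quadratic relation `T_s² = (q₁ − 1)·T_s + q₁·1` -/
  quadratic : Ts * Ts = ((q1 : ℂ) - 1) • Ts + (q1 : ℂ) • (1 : H)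
  /-- `θ_y·T_s − T_s·θ_{s(y)}` lies in `ℂ[Y]` -/
  bernstein_mem : ∀ y : Y,
    emb (AddMonoidAlgebra.single y 1) * Ts
        - Ts * emb (AddMonoidAlgebra.single (y - root y • coroot) 1)
      ∈ Set.range emb
  /-- the Bernstein relation
  `(θ_y·T_s − T_s·θ_{s(y)})·(θ₀ − θ_{−2α∨}) = ((q₁−1)·θ₀ + √q₁(√q₀ − 1/√q₀)·θ_{−α∨})·(θ_y − θ_{s(y)})` -/
  bernstein : ∀ y : Y,
    (emb (AddMonoidAlgebra.single y 1) * Ts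
        - Ts * emb (AddMonoidAlgebra.single (y - root y • coroot) 1))
      * ((1 : H) - emb (AddMonoidAlgebra.single (-(2 • coroot)) 1))
    = (((q1 : ℂ) - 1) • (1 : H)
        + ((Real.sqrt q1 * (Real.sqrt q0 - 1 / Real.sqrt q0) : ℝ) : ℂ)
          • emb (AddMonoidAlgebra.single (-coroot) 1))
      * (emb (AddMonoidAlgebra.single y 1)
          - emb (AddMonoidAlgebra.single (y - root y • coroot) 1))

namespace RankOneAffineHecke

variable {Y : Type*} [AddCommGroup Y] {H : Type*} [Ring H] [Algebra ℂ H]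

/-- the element `θ_y ∈ H` -/
def θ (S : RankOneAffineHecke Y H) (y : Y) : H :=
  S.emb (AddMonoidAlgebra.single y 1)

lemma θ_mul (S : RankOneAffineHecke Y H) (y z : Y) : S.θ y * S.θ z = S.θ (y + z) := by
  rw [θ, θ, θ, ← map_mul, AddMonoidAlgebra.single_mul_single, one_mul]

lemma θ_zero (S : RankOneAffineHecke Y H) : S.θ 0 = 1 := by
  rw [θ, ← AddMonoidAlgebra.one_def, map_one]

lemma key (S : RankOneAffineHecke Y H) :
    S.Ts * S.θ (-S.coroot) = S.θ S.coroot * S.Ts - ((S.q1 : ℂ) - 1) • S.θ S.coroot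
      - ((Real.sqrt S.q1 * (Real.sqrt S.q0 - 1 / Real.sqrt S.q0) : ℝ) : ℂ) • 1 := by
  classical
  haveI := S.free
  haveI : UniqueSums Y := by
    let b := Module.Free.chooseBasis ℤ Y
    exact UniqueSums.of_injective_addHom b.repr.toLinearMap.toAddMonoidHom.toAddHom
      b.repr.injective inferInstance
  set c : ℂ := ((Real.sqrt S.q1 * (Real.sqrt S.q0 - 1 / Real.sqrt S.q0) : ℝ) : ℂ) with hc
  have hsa : S.coroot - S.root S.coroot • S.coroot = -S.coroot := by
    rw [S.root_coroot, two_zsmul]; abel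
  obtain ⟨g, hg⟩ := S.bernstein_mem S.coroot
  have hb := S.bernstein S.coroot
  rw [hsa] at hg hb
  rw [← hg] at hb
  have hz : (-(2 • S.coroot) : Y) ≠ 0 := by
    intro h
    have h4 := congrArg S.root h
    rw [map_zero, map_neg, map_nsmul, S.root_coroot] at h4
    norm_num at h4
  have hX : ((1 : AddMonoidAlgebra ℂ Y) - AddMonoidAlgebra.single (-(2 • S.coroot)) 1) ≠ 0 := by
    rw [sub_ne_zero, AddMonoidAlgebra.one_def]
    intro h
    rcases AddMonoidAlgebra.single_inj.mp h with h' | h'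
    · exact hz h'.1.symm
    · exact one_ne_zero h'.1
  have h1 : g * ((1 : AddMonoidAlgebra ℂ Y) - AddMonoidAlgebra.single (-(2 • S.coroot)) 1)
      = ((((S.q1 : ℂ) - 1) • 1 + c • AddMonoidAlgebra.single (-S.coroot) 1)
          * AddMonoidAlgebra.single S.coroot 1)
        * ((1 : AddMonoidAlgebra ℂ Y) - AddMonoidAlgebra.single (-(2 • S.coroot)) 1) := by
    apply S.emb_injective
    simp only [map_mul, map_sub, map_add, map_one, map_smul]
    have h2 : (AddMonoidAlgebra.single S.coroot 1 : AddMonoidAlgebra ℂ Y)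
        * (1 - AddMonoidAlgebra.single (-(2 • S.coroot)) 1)
        = AddMonoidAlgebra.single S.coroot 1 - AddMonoidAlgebra.single (-S.coroot) 1 := by
      rw [mul_sub, mul_one, AddMonoidAlgebra.single_mul_single, mul_one]
      have : S.coroot + -(2 • S.coroot) = -S.coroot := by rw [two_nsmul]; abel
      rw [this]
    have h2' := congrArg S.emb h2
    simp only [map_mul, map_sub, map_one] at h2'
    rw [mul_assoc, h2']
    exact hb
  have hgval : g = ((S.q1 : ℂ) - 1) • AddMonoidAlgebra.single S.coroot 1 + c • 1 := by
    have := mul_right_cancel₀ hX h1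
    rw [this, add_mul, smul_mul_assoc, one_mul, smul_mul_assoc,
      AddMonoidAlgebra.single_mul_single, one_mul, neg_add_cancel, ← AddMonoidAlgebra.one_def]
  have hemb : S.θ S.coroot * S.Ts - S.Ts * S.θ (-S.coroot)
      = ((S.q1 : ℂ) - 1) • S.θ S.coroot + c • 1 := by
    rw [θ, θ, ← hg, hgval, map_add, map_smul, map_smul, map_one]
  rw [eq_sub_iff_add_eq, eq_sub_iff_add_eq]
  have := sub_eq_iff_eq_add.mp hemb
  rw [this]; abel

lemma hinv' (S : RankOneAffineHecke Y H) : S.θ (-S.coroot) * S.θ S.coroot = 1 := by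
  rw [S.θ_mul, neg_add_cancel, S.θ_zero]

end RankOneAffineHecke

/-- In a rank-one affine Hecke algebra `H` with data `(Y, α, α∨, q₁, q₀)` and element
`T_s` one has `(θ_{−α∨}·T_s)² = −√q₁·(√q₀ − 1/√q₀)·(θ_{−α∨}·T_s) + q₁·1`, and the
element `T_{s,0} := √(q₀/q₁)·(θ_{α∨}·T_s − (q₁ − 1)·θ_{α∨})` satisfies the quadratic
relation `T_{s,0}² = (q₀ − 1)·T_{s,0} + q₀·1`. -/
theorem rankOneAffineHecke_quadratic_relations
    {Y : Type*} [AddCommGroup Y] {H : Type*} [Ring H] [Algebra ℂ H]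
    (S : RankOneAffineHecke Y H)
    (Ts0 : H)
    (hTs0 : Ts0 = ((Real.sqrt (S.q0 / S.q1) : ℝ) : ℂ) •
        (S.θ S.coroot * S.Ts - ((S.q1 : ℂ) - 1) • S.θ S.coroot)) :
    (S.θ (-S.coroot) * S.Ts) * (S.θ (-S.coroot) * S.Ts)
        = ((-(Real.sqrt S.q1 * (Real.sqrt S.q0 - 1 / Real.sqrt S.q0)) : ℝ) : ℂ)
            • (S.θ (-S.coroot) * S.Ts) + (S.q1 : ℂ) • (1 : H) ∧
    Ts0 * Ts0 = ((S.q0 : ℂ) - 1) • Ts0 + (S.q0 : ℂ) • (1 : H) := by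
  have hkey := S.key
  have hinv := S.hinv'
  have hq := S.quadratic
  set c : ℂ := ((Real.sqrt S.q1 * (Real.sqrt S.q0 - 1 / Real.sqrt S.q0) : ℝ) : ℂ) with hc
  have hq1pos : (0:ℝ) < S.q1 := zero_lt_one.trans S.one_lt_q1
  have hq0pos : (0:ℝ) < S.q0 := zero_lt_one.trans S.one_lt_q0
  have hcneg : ((-(Real.sqrt S.q1 * (Real.sqrt S.q0 - 1 / Real.sqrt S.q0)) : ℝ) : ℂ) = -c := by
    rw [hc]; push_cast; ring
  constructor
  · have e0 : S.θ (-S.coroot) * S.Ts * (S.θ (-S.coroot) * S.Ts)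
        = S.θ (-S.coroot) * (S.Ts * S.θ (-S.coroot)) * S.Ts := by
      simp only [mul_assoc]
    rw [e0, hkey, hcneg]
    have expand : S.θ (-S.coroot) * (S.θ S.coroot * S.Ts - ((S.q1 : ℂ) - 1) • S.θ S.coroot - c • 1) * S.Ts
        = (S.θ (-S.coroot) * S.θ S.coroot) * (S.Ts * S.Ts)
          - ((S.q1 : ℂ) - 1) • ((S.θ (-S.coroot) * S.θ S.coroot) * S.Ts)
          - c • (S.θ (-S.coroot) * S.Ts) := by
      simp only [mul_sub, sub_mul, mul_smul_comm, smul_mul_assoc, mul_one, mul_assoc]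
    rw [expand, hinv, one_mul, one_mul, hq]
    module
  · have hU : S.θ S.coroot * S.Ts - ((S.q1 : ℂ) - 1) • S.θ S.coroot
        = S.Ts * S.θ (-S.coroot) + c • 1 := by
      rw [hkey]; abel
    have hUU : (S.θ S.coroot * S.Ts - ((S.q1 : ℂ) - 1) • S.θ S.coroot)
        * (S.θ S.coroot * S.Ts - ((S.q1 : ℂ) - 1) • S.θ S.coroot)
        = c • (S.θ S.coroot * S.Ts - ((S.q1 : ℂ) - 1) • S.θ S.coroot) + (S.q1 : ℂ) • 1 := by
      nth_rewrite 1 [hU]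
      have expand : (S.Ts * S.θ (-S.coroot) + c • 1)
          * (S.θ S.coroot * S.Ts - ((S.q1 : ℂ) - 1) • S.θ S.coroot)
          = S.Ts * (S.θ (-S.coroot) * S.θ S.coroot) * S.Ts
            - ((S.q1 : ℂ) - 1) • (S.Ts * (S.θ (-S.coroot) * S.θ S.coroot))
            + c • (S.θ S.coroot * S.Ts - ((S.q1 : ℂ) - 1) • S.θ S.coroot) := by
        simp only [mul_sub, sub_mul, add_mul, mul_smul_comm, smul_mul_assoc, one_mul, mul_one,
          mul_assoc, smul_sub]
        module
      rw [expand, hinv, mul_one, hq]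
      abel
    have hrs : Real.sqrt (S.q0 / S.q1) * Real.sqrt S.q1 = Real.sqrt S.q0 := by
      rw [← Real.sqrt_mul (by positivity), div_mul_cancel₀ _ (ne_of_gt hq1pos)]
    have hsq0 : Real.sqrt S.q0 * (Real.sqrt S.q0 - 1 / Real.sqrt S.q0) = S.q0 - 1 := by
      rw [mul_sub, Real.mul_self_sqrt hq0pos.le, mul_one_div,
        div_self (ne_of_gt (Real.sqrt_pos.mpr hq0pos))]
    have hr2 : Real.sqrt (S.q0 / S.q1) * Real.sqrt (S.q0 / S.q1) = S.q0 / S.q1 :=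
      Real.mul_self_sqrt (by positivity)
    have s1 : ((Real.sqrt (S.q0 / S.q1) : ℝ) : ℂ) * ((Real.sqrt (S.q0 / S.q1) : ℝ) : ℂ) * c
        = ((S.q0 : ℂ) - 1) * ((Real.sqrt (S.q0 / S.q1) : ℝ) : ℂ) := by
      rw [hc]
      norm_cast
      calc Real.sqrt (S.q0 / S.q1) * Real.sqrt (S.q0 / S.q1)
            * (Real.sqrt S.q1 * (Real.sqrt S.q0 - 1 / Real.sqrt S.q0))
          = (Real.sqrt (S.q0 / S.q1) * Real.sqrt S.q1)
              * (Real.sqrt S.q0 - 1 / Real.sqrt S.q0) * Real.sqrt (S.q0 / S.q1) := by ring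
        _ = (S.q0 - 1) * Real.sqrt (S.q0 / S.q1) := by rw [hrs, hsq0]
    have s2 : ((Real.sqrt (S.q0 / S.q1) : ℝ) : ℂ) * ((Real.sqrt (S.q0 / S.q1) : ℝ) : ℂ) * (S.q1 : ℂ)
        = (S.q0 : ℂ) := by
      norm_cast
      rw [hr2, div_mul_cancel₀ _ (ne_of_gt hq1pos)]
    rw [hTs0, smul_mul_assoc, mul_smul_comm, smul_smul, hUU, smul_add, smul_smul, smul_smul,
      smul_smul, s1, s2]


end
end

section
/- Let H be a rank-one affine Hecke algebra with data (Y, α, α∨, q₁, q₀) and element T_s, and set T_{s,0} := √(q₀/q₁)·(θ_{α∨}·T_s − (q₁ − 1)·θ_{α∨}). Then θ_{α∨}·T_{s,0} − T_{s,0}·θ_{−α∨} = (q₀ − 1)·θ_{α∨} + (√(q₁·q₀) − √(q₀/q₁))·1. -/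
noncomputable section

/-- In a rank-one affine Hecke algebra `H` with data `(Y, α, α∨, q₁, q₀)` and element
`T_s`, setting `T_{s,0} := √(q₀/q₁)·(θ_{α∨}·T_s − (q₁ − 1)·θ_{α∨})`, one has
`θ_{α∨}·T_{s,0} − T_{s,0}·θ_{−α∨} = (q₀ − 1)·θ_{α∨} + (√(q₁·q₀) − √(q₀/q₁))·1`. -/
theorem rankOneAffineHecke_bernstein_for_Ts0
    {Y : Type*} [AddCommGroup Y] {H : Type*} [Ring H] [Algebra ℂ H]
    (S : RankOneAffineHecke Y H)
    (Ts0 : H)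
    (hTs0 : Ts0 = ((Real.sqrt (S.q0 / S.q1) : ℝ) : ℂ) •
        (S.θ S.coroot * S.Ts - ((S.q1 : ℂ) - 1) • S.θ S.coroot)) :
    S.θ S.coroot * Ts0 - Ts0 * S.θ (-S.coroot)
      = ((S.q0 : ℂ) - 1) • S.θ S.coroot
        + ((Real.sqrt (S.q1 * S.q0) - Real.sqrt (S.q0 / S.q1) : ℝ) : ℂ) • (1 : H) := by
  classical
  haveI := S.free
  haveI : UniqueSums Y :=
    UniqueSums.of_injective_addHom
      (Module.Free.chooseBasis ℤ Y).repr.toLinearMap.toAddMonoidHom.toAddHom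
      (Module.Free.chooseBasis ℤ Y).repr.injective inferInstance
  have hq1 : (0:ℝ) < S.q1 := lt_trans one_pos S.one_lt_q1
  have hq0 : (0:ℝ) < S.q0 := lt_trans one_pos S.one_lt_q0
  set a : ℂ := (S.q1 : ℂ) - 1 with ha_def
  set b : ℂ := ((Real.sqrt S.q1 * (Real.sqrt S.q0 - 1 / Real.sqrt S.q0) : ℝ) : ℂ) with hb_def
  set c : ℂ := ((Real.sqrt (S.q0 / S.q1) : ℝ) : ℂ) with hc_def
  -- the reflection of the coroot
  have hs : S.coroot - S.root S.coroot • S.coroot = -S.coroot := by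
    rw [S.root_coroot, two_zsmul]; abel
  -- group identities
  have hg1 : S.coroot + -(2 • S.coroot) = -S.coroot := by
    rw [two_nsmul]; abel
  have hg2 : -S.coroot + -S.coroot = -(2 • S.coroot) := by
    rw [two_nsmul]; abel
  have hg3 : (-S.coroot) + S.coroot = 0 := by abel
  -- elements of A := AddMonoidAlgebra ℂ Y
  set A := AddMonoidAlgebra ℂ Y
  set e : A := a • AddMonoidAlgebra.single S.coroot 1 + b • 1 with he_def
  set u : A := 1 - AddMonoidAlgebra.single (-(2 • S.coroot)) 1 with hu_def
  have hsingle : ∀ y z : Y, (AddMonoidAlgebra.single y (1:ℂ)) * AddMonoidAlgebra.single z 1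
      = AddMonoidAlgebra.single (y + z) 1 := by
    intro y z; rw [AddMonoidAlgebra.single_mul_single, one_mul]
  -- e * u equals the element underlying the RHS of the Bernstein relation
  have hA : e * u
      = (a • (1:A) + b • AddMonoidAlgebra.single (-S.coroot) 1)
        * (AddMonoidAlgebra.single S.coroot 1 - AddMonoidAlgebra.single (-S.coroot) 1) := by
    rw [he_def, hu_def, AddMonoidAlgebra.one_def]
    simp only [mul_sub, sub_mul, add_mul, mul_add, smul_mul_assoc, hsingle, add_zero,
      zero_add, neg_add_cancel, hg1, hg2]
  -- u ≠ 0
  have h2c : -(2 • S.coroot) ≠ (0:Y) := by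
    intro h
    have h4 : S.root (-(2 • S.coroot)) = -4 := by
      rw [map_neg, two_nsmul, map_add, S.root_coroot]; norm_num
    rw [h, map_zero] at h4
    norm_num at h4
  have hu0 : u ≠ 0 := by
    rw [hu_def, sub_ne_zero, AddMonoidAlgebra.one_def]
    intro h
    rcases AddMonoidAlgebra.single_inj.mp h with ⟨h1, -⟩ | ⟨h1, -⟩
    · exact h2c h1.symm
    · exact one_ne_zero h1
  -- the key Bernstein computation: θ·Ts − Ts·θ⁻ = a•θ + b•1
  have hmem := S.bernstein_mem S.coroot
  rw [hs] at hmem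
  obtain ⟨d, hd⟩ := hmem
  have hber := S.bernstein S.coroot
  rw [hs, ← hd] at hber
  have hembu : (1 : H) - S.emb (AddMonoidAlgebra.single (-(2 • S.coroot)) 1) = S.emb u := by
    rw [hu_def, map_sub, map_one]
  rw [hembu, ← map_mul] at hber
  have hRHS : (a • (1:H)
        + b • S.emb (AddMonoidAlgebra.single (-S.coroot) 1))
      * (S.emb (AddMonoidAlgebra.single S.coroot 1)
          - S.emb (AddMonoidAlgebra.single (-S.coroot) 1)) = S.emb (e * u) := by
    rw [hA]
    simp only [map_mul, map_add, map_sub, map_smul, map_one]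
  rw [hRHS] at hber
  have hde : d = e := mul_right_cancel₀ hu0 (S.emb_injective hber)
  rw [hde] at hd
  have key : S.emb (AddMonoidAlgebra.single S.coroot 1) * S.Ts
      - S.Ts * S.emb (AddMonoidAlgebra.single (-S.coroot) 1)
      = a • S.emb (AddMonoidAlgebra.single S.coroot 1) + b • 1 := by
    rw [← hd, he_def, map_add, map_smul, map_smul, map_one]
  -- θ_{α∨} · θ_{−α∨} = 1
  have hθ2 : S.emb (AddMonoidAlgebra.single S.coroot 1)
      * S.emb (AddMonoidAlgebra.single (-S.coroot) 1) = 1 := by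
    rw [← map_mul, hsingle, add_neg_cancel, ← AddMonoidAlgebra.one_def, map_one]
  -- main computation
  simp only [RankOneAffineHecke.θ] at hTs0 ⊢
  rw [hTs0, mul_smul_comm, smul_mul_assoc, ← smul_sub]
  have expand : S.emb (AddMonoidAlgebra.single S.coroot 1)
        * (S.emb (AddMonoidAlgebra.single S.coroot 1) * S.Ts
            - a • S.emb (AddMonoidAlgebra.single S.coroot 1))
      - (S.emb (AddMonoidAlgebra.single S.coroot 1) * S.Ts
            - a • S.emb (AddMonoidAlgebra.single S.coroot 1))
        * S.emb (AddMonoidAlgebra.single (-S.coroot) 1)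
      = S.emb (AddMonoidAlgebra.single S.coroot 1)
          * (S.emb (AddMonoidAlgebra.single S.coroot 1) * S.Ts
              - S.Ts * S.emb (AddMonoidAlgebra.single (-S.coroot) 1))
        - a • (S.emb (AddMonoidAlgebra.single S.coroot 1)
              * S.emb (AddMonoidAlgebra.single S.coroot 1))
        + a • (S.emb (AddMonoidAlgebra.single S.coroot 1)
              * S.emb (AddMonoidAlgebra.single (-S.coroot) 1)) := by
    rw [mul_sub, sub_mul, mul_smul_comm, smul_mul_assoc, mul_sub, mul_assoc]
    abel
  rw [expand, key, hθ2, mul_add, mul_smul_comm, mul_smul_comm, mul_one]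
  have hcollect : a • (S.emb (AddMonoidAlgebra.single S.coroot 1)
          * S.emb (AddMonoidAlgebra.single S.coroot 1))
        + b • S.emb (AddMonoidAlgebra.single S.coroot 1)
      - a • (S.emb (AddMonoidAlgebra.single S.coroot 1)
          * S.emb (AddMonoidAlgebra.single S.coroot 1))
      + a • (1:H)
      = b • S.emb (AddMonoidAlgebra.single S.coroot 1) + a • (1:H) := by abel
  rw [hcollect, smul_add, smul_smul, smul_smul]
  -- real arithmetic
  have hs0 : (0:ℝ) < Real.sqrt S.q0 := Real.sqrt_pos.mpr hq0
  have hbr : Real.sqrt (S.q0 / S.q1)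
      * (Real.sqrt S.q1 * (Real.sqrt S.q0 - 1 / Real.sqrt S.q0)) = S.q0 - 1 := by
    rw [← mul_assoc, ← Real.sqrt_mul (by positivity), div_mul_cancel₀ _ (ne_of_gt hq1),
      mul_sub, Real.mul_self_sqrt hq0.le, mul_one_div, div_self (ne_of_gt hs0)]
  have har : Real.sqrt (S.q0 / S.q1) * (S.q1 - 1)
      = Real.sqrt (S.q1 * S.q0) - Real.sqrt (S.q0 / S.q1) := by
    rw [mul_sub, mul_one]
    congr 1
    rw [show S.q1 * S.q0 = (S.q0 / S.q1) * S.q1 ^ 2 by field_simp,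
      Real.sqrt_mul (by positivity), Real.sqrt_sq hq1.le]
  have hcb : c * b = (S.q0 : ℂ) - 1 := by
    rw [hc_def, hb_def, ← Complex.ofReal_mul, hbr]; push_cast; ring
  have hca : c * a = ((Real.sqrt (S.q1 * S.q0) - Real.sqrt (S.q0 / S.q1) : ℝ) : ℂ) := by
    rw [hc_def, ha_def, ← har]; push_cast; ring
  rw [hcb, hca]

end
end

section
/- Let H be a rank-one affine Hecke algebra with data (Y, α, α∨, q₁, q₀) and element T_s. Then the ℂ-linear map ι : H → H determined on the ℂ-basis {θ_y, θ_y·T_s : y ∈ Y} of H by ι(θ_y) = θ_{−y} and ι(θ_y·T_s) = θ_{−y}·((q₁ − 1)·1 − T_s) is an automorphism of H as a ℂ-algebra, and ι ∘ ι is the identity. -/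
noncomputable section

namespace RankOneAffineHecke

section Aux

variable {Y : Type*} [AddCommGroup Y] {H : Type*} [Ring H] [Algebra ℂ H]

open AddMonoidAlgebra

/-- negation automorphism of the group algebra -/
def ν : AddMonoidAlgebra ℂ Y ≃ₐ[ℂ] AddMonoidAlgebra ℂ Y :=
  AddMonoidAlgebra.domCongr ℂ ℂ (AddEquiv.neg Y)

lemma ν_single (y : Y) (a : ℂ) : (ν (Y := Y)) (single y a) = single (-y) a := by
  simp [ν]

lemma ν_ν (f : AddMonoidAlgebra ℂ Y) : (ν (Y := Y)) (ν f) = f := by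
  ext a; simp [ν]

variable (S : RankOneAffineHecke Y H)

/-- the reflection -/
def sx (z : Y) : Y := z - S.root z • S.coroot

lemma root_sx (z : Y) : S.root (S.sx z) = - S.root z := by
  simp [sx, map_zsmul, S.root_coroot]; ring

lemma sx_sx (z : Y) : S.sx (S.sx z) = z := by
  rw [sx, root_sx, sx]; module

lemma sx_neg (z : Y) : S.sx (-z) = - S.sx z := by
  simp [sx]; module

include S in
lemma tus : TwoUniqueSums Y := by
  haveI := S.free
  exact TwoUniqueSums.of_injective_addHom
    (Module.Free.chooseBasis ℤ Y).repr.toAddEquiv.toAddMonoidHom.toAddHom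
    (Module.Free.chooseBasis ℤ Y).repr.toAddEquiv.injective inferInstance

lemma two_coroot_ne : -(2 • S.coroot) ≠ 0 := by
  intro h
  have h2 : (2 • S.coroot : Y) = 0 := by simpa using congrArg Neg.neg h
  have := congrArg S.root h2
  simp [S.root_coroot] at this

/-- decomposition of an element of `H` -/
def dec (h : H) : AddMonoidAlgebra ℂ Y × AddMonoidAlgebra ℂ Y :=
  (S.free_module h).choose

lemma dec_spec (h : H) : h = S.emb (S.dec h).1 + S.emb (S.dec h).2 * S.Ts :=
  (S.free_module h).choose_spec.1

lemma dec_unique {h : H} {a b : AddMonoidAlgebra ℂ Y}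
    (e : h = S.emb a + S.emb b * S.Ts) : S.dec h = (a, b) :=
  ((S.free_module h).choose_spec.2 (a, b) e).symm

lemma dec_emb (f : AddMonoidAlgebra ℂ Y) : S.dec (S.emb f) = (f, 0) :=
  S.dec_unique (by simp)

lemma dec_embTs (f : AddMonoidAlgebra ℂ Y) : S.dec (S.emb f * S.Ts) = (0, f) :=
  S.dec_unique (by simp)

/-- the element `U = (q₁-1)·1 - T_s` -/
def U : H := ((S.q1 : ℂ) - 1) • (1 : H) - S.Ts

/-- the involution as a bare function -/
def iota (h : H) : H := S.emb (ν (S.dec h).1) + S.emb (ν (S.dec h).2) * S.U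

lemma iota_emb (f : AddMonoidAlgebra ℂ Y) : S.iota (S.emb f) = S.emb (ν f) := by
  simp [iota, dec_emb]

lemma iota_embTs (f : AddMonoidAlgebra ℂ Y) :
    S.iota (S.emb f * S.Ts) = S.emb (ν f) * S.U := by
  simp [iota, dec_embTs]

lemma dec_add (h h' : H) : S.dec (h + h') = S.dec h + S.dec h' :=
  S.dec_unique (by
    conv_lhs => rw [S.dec_spec h, S.dec_spec h']
    simp only [Prod.fst_add, Prod.snd_add, map_add, add_mul]
    abel)

lemma dec_smul (x : ℂ) (h : H) : S.dec (x • h) = x • S.dec h :=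
  S.dec_unique (by
    conv_lhs => rw [S.dec_spec h]
    simp only [Prod.smul_fst, Prod.smul_snd, map_smul, smul_add, smul_mul_assoc])

lemma iota_add (h h' : H) : S.iota (h + h') = S.iota h + S.iota h' := by
  simp only [iota, dec_add, Prod.fst_add, Prod.snd_add, map_add, add_mul]
  abel

lemma iota_smul (x : ℂ) (h : H) : S.iota (x • h) = x • S.iota h := by
  simp only [iota, dec_smul, Prod.smul_fst, Prod.smul_snd, map_smul, smul_add,
    smul_mul_assoc]

lemma iota_sub (h h' : H) : S.iota (h - h') = S.iota h - S.iota h' := by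
  have e : h - h' + h' = h := by abel
  have := S.iota_add (h - h') h'
  rw [e] at this
  exact eq_sub_of_add_eq this.symm

/-- the correction term `c z` -/
def c (z : Y) : AddMonoidAlgebra ℂ Y := (S.bernstein_mem (S.sx z)).choose

lemma emb_c (z : Y) :
    S.emb (S.c z) = S.θ (S.sx z) * S.Ts - S.Ts * S.θ z := by
  have h : S.emb (S.c z) = S.θ (S.sx z) * S.Ts - S.Ts * S.θ (S.sx (S.sx z)) :=
    (S.bernstein_mem (S.sx z)).choose_spec
  rw [S.sx_sx] at h
  exact h

/-- the scalar `κ` -/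
def κ : ℂ := ((Real.sqrt S.q1 * (Real.sqrt S.q0 - 1 / Real.sqrt S.q0) : ℝ) : ℂ)

/-- the Bernstein factor in the group algebra -/
def g : AddMonoidAlgebra ℂ Y :=
  ((S.q1 : ℂ) - 1) • (1 : AddMonoidAlgebra ℂ Y) + S.κ • single (-S.coroot) 1

lemma emb_g : S.emb S.g = ((S.q1 : ℂ) - 1) • (1 : H) + S.κ • S.θ (-S.coroot) := by
  simp only [g, map_add, map_smul, map_one, θ]

lemma bernA (z : Y) :
    S.c z * ((1 : AddMonoidAlgebra ℂ Y) - single (-(2 • S.coroot)) 1)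
      = S.g * (single (S.sx z) 1 - single z 1) := by
  apply S.emb_injective
  have h : (S.θ (S.sx z) * S.Ts - S.Ts * S.θ (S.sx (S.sx z)))
      * ((1 : H) - S.emb (single (-(2 • S.coroot)) 1))
      = (((S.q1 : ℂ) - 1) • (1 : H) + S.κ • S.emb (single (-S.coroot) 1))
      * (S.emb (single (S.sx z) 1) - S.emb (single (S.sx (S.sx z)) 1)) :=
    S.bernstein (S.sx z)
  rw [S.sx_sx] at h
  rw [map_mul, map_mul, map_sub, map_sub, map_one, S.emb_c, emb_g]
  exact h

lemma key_identity (z : Y) :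
    ν (S.c z) + S.c (-z)
      = ((S.q1 : ℂ) - 1) • (single (-(S.sx z)) 1 - single (-z) 1) := by
  haveI := S.tus
  set t : AddMonoidAlgebra ℂ Y := single (-S.coroot) (1 : ℂ) with ht_def
  set t' : AddMonoidAlgebra ℂ Y := single (S.coroot) (1 : ℂ) with ht'_def
  have htt' : t * t' = 1 := by
    rw [ht_def, ht'_def, AddMonoidAlgebra.single_mul_single]
    simp [AddMonoidAlgebra.one_def]
  have h2c : (single (-(2 • S.coroot)) (1:ℂ) : AddMonoidAlgebra ℂ Y) = t * t := by
    rw [ht_def, AddMonoidAlgebra.single_mul_single]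
    congr 1
    · module
    · ring
  have h2c' : (single ((2 • S.coroot)) (1:ℂ) : AddMonoidAlgebra ℂ Y) = t' * t' := by
    rw [ht'_def, AddMonoidAlgebra.single_mul_single]
    congr 1
    · module
    · ring
  have hd : (1 : AddMonoidAlgebra ℂ Y) - t * t ≠ 0 := by
    rw [← h2c]
    intro h
    rw [sub_eq_zero, AddMonoidAlgebra.one_def] at h
    have := Finsupp.ext_iff.mp (congrArg AddMonoidAlgebra.coeff h) 0
    change (Finsupp.single _ _ : Y →₀ ℂ) 0 = Finsupp.single _ _ 0 at this
    rw [Finsupp.single_eq_same, Finsupp.single_eq_of_ne' (S.two_coroot_ne)] at this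
    exact one_ne_zero this
  apply mul_right_cancel₀ hd
  -- the two Bernstein identities
  have h1 : ν (S.c z) * (1 - t' * t')
      = (ν S.g) * (single (-(S.sx z)) 1 - single (-z) 1) := by
    have := congrArg (ν (Y := Y)) (S.bernA z)
    rw [map_mul, map_mul, map_sub, map_sub, map_one, ν_single, ν_single, ν_single,
      neg_neg, h2c'] at this
    exact this
  have h2 : S.c (-z) * (1 - t * t)
      = S.g * (single (-(S.sx z)) 1 - single (-z) 1) := by
    have := S.bernA (-z)
    rw [S.sx_neg, h2c] at this
    exact this
  have hg : S.g = algebraMap ℂ _ ((S.q1 : ℂ) - 1) * 1 + algebraMap ℂ _ S.κ * t := by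
    rw [g, Algebra.smul_def, Algebra.smul_def, ht_def]
  have hνg : ν S.g = algebraMap ℂ _ ((S.q1 : ℂ) - 1) * 1 + algebraMap ℂ _ S.κ * t' := by
    rw [g, map_add, map_smul, map_smul, map_one, ν_single, neg_neg, Algebra.smul_def,
      Algebra.smul_def, ht'_def]
  rw [hg] at h2
  rw [hνg] at h1
  rw [Algebra.smul_def]
  set N := ν (S.c z)
  set M := S.c (-z)
  set u := (single (-(S.sx z)) (1:ℂ) : AddMonoidAlgebra ℂ Y)
  set v := (single (-z) (1:ℂ) : AddMonoidAlgebra ℂ Y)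
  set Q := algebraMap ℂ (AddMonoidAlgebra ℂ Y) ((S.q1 : ℂ) - 1)
  set K := algebraMap ℂ (AddMonoidAlgebra ℂ Y) S.κ
  linear_combination (-(t*t)) * h1 + h2 + (-(N*(t*t'+1)) - K*t*(u - v)) * htt'

lemma iota_Ts_theta (z : Y) : S.iota (S.Ts * S.θ z) = S.U * S.θ (-z) := by
  -- Ts * θ z = emb (-(c z)) + emb (single (sx z) 1) * Ts
  have hdec : S.Ts * S.θ z = S.emb (-(S.c z)) + S.emb (single (S.sx z) 1) * S.Ts := by
    rw [map_neg, S.emb_c]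
    unfold θ
    abel
  have h1 : S.iota (S.Ts * S.θ z)
      = S.emb (ν (-(S.c z))) + S.emb (ν (single (S.sx z) 1)) * S.U := by
    rw [hdec, S.iota_add, S.iota_emb, S.iota_embTs]
  rw [h1, map_neg, ν_single, map_neg]
  -- RHS: U * θ(-z) = (q1-1)•θ(-z) - Ts * θ(-z)
  have hU : S.U * S.θ (-z) = ((S.q1 : ℂ) - 1) • S.θ (-z) - S.Ts * S.θ (-z) := by
    rw [U, sub_mul, smul_mul_assoc, one_mul]
  have hTs : S.Ts * S.θ (-z) = S.θ (S.sx (-z)) * S.Ts - S.emb (S.c (-z)) := by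
    rw [S.emb_c]; abel
  rw [hU, hTs, S.sx_neg]
  have hkey := congrArg S.emb (S.key_identity z)
  rw [map_add, map_smul, map_sub] at hkey
  have hUexp : S.emb (single (-S.sx z) 1) * S.U
      = ((S.q1 : ℂ) - 1) • S.emb (single (-S.sx z) 1)
        - S.emb (single (-S.sx z) 1) * S.Ts := by
    rw [U, mul_sub, mul_smul_comm, mul_one]
  rw [hUexp]
  unfold θ at *
  rw [show S.emb (ν (S.c z)) = ((S.q1 : ℂ) - 1) • (S.emb (single (-S.sx z) 1)
      - S.emb (single (-z) 1)) - S.emb (S.c (-z)) from by rw [← hkey]; abel]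
  rw [smul_sub]
  abel

lemma iota_zero : S.iota 0 = 0 := by
  have h0 : S.dec (0 : H) = (0, 0) := S.dec_unique (by simp)
  simp [iota, h0]

lemma iota_Ts_emb (f : AddMonoidAlgebra ℂ Y) :
    S.iota (S.Ts * S.emb f) = S.U * S.emb (ν f) := by
  induction f using AddMonoidAlgebra.induction_linear with
  | zero => rw [map_zero, mul_zero, S.iota_zero, map_zero, map_zero, mul_zero]
  | add p q hp hq => simp only [map_add, mul_add, S.iota_add, hp, hq]
  | single a b =>
      have hb : (single a b : AddMonoidAlgebra ℂ Y) = b • single a 1 := by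
        rw [AddMonoidAlgebra.smul_single', mul_one]
      rw [hb, map_smul, mul_smul_comm, S.iota_smul, map_smul, map_smul, mul_smul_comm]
      congr 1
      rw [ν_single]
      exact S.iota_Ts_theta a

lemma iota_emb_mul (f : AddMonoidAlgebra ℂ Y) (X : H) :
    S.iota (S.emb f * X) = S.emb (ν f) * S.iota X := by
  conv_lhs => rw [S.dec_spec X]
  rw [mul_add, ← mul_assoc, ← map_mul, ← map_mul, S.iota_add, S.iota_emb, S.iota_embTs]
  simp only [map_mul]
  rw [iota, mul_add, mul_assoc]

lemma U_sq : S.U * S.U = ((S.q1 : ℂ) - 1) • S.U + (S.q1 : ℂ) • (1 : H) := by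
  rw [U, sub_mul, mul_sub, mul_sub, S.quadratic]
  simp only [smul_mul_assoc, mul_smul_comm, one_mul, mul_one]
  rw [smul_sub]
  module

lemma iota_mul_Ts (X : H) : S.iota (X * S.Ts) = S.iota X * S.U := by
  conv_lhs => rw [S.dec_spec X]
  rw [add_mul, mul_assoc, S.quadratic, mul_add, mul_smul_comm, mul_smul_comm, mul_one,
    S.iota_add, S.iota_add, S.iota_smul, S.iota_smul, S.iota_embTs, S.iota_embTs,
    S.iota_emb]
  rw [iota, add_mul, mul_assoc, S.U_sq, mul_add, mul_smul_comm, mul_smul_comm, mul_one]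

lemma iota_Ts_mul (X : H) : S.iota (S.Ts * X) = S.U * S.iota X := by
  conv_lhs => rw [S.dec_spec X]
  rw [mul_add, ← mul_assoc, S.iota_add, S.iota_Ts_emb, S.iota_mul_Ts, S.iota_Ts_emb,
    iota, mul_add, ← mul_assoc]

lemma iota_mul (h h' : H) : S.iota (h * h') = S.iota h * S.iota h' := by
  conv_lhs => rw [S.dec_spec h]
  rw [add_mul, mul_assoc, S.iota_add, S.iota_emb_mul, S.iota_emb_mul, S.iota_Ts_mul]
  rw [show S.iota h = S.emb (ν (S.dec h).1) + S.emb (ν (S.dec h).2) * S.U from rfl,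
    add_mul, mul_assoc]

lemma iota_iota (h : H) : S.iota (S.iota h) = h := by
  have hU : ∀ f : AddMonoidAlgebra ℂ Y, S.emb f * S.U
      = ((S.q1 : ℂ) - 1) • S.emb f - S.emb f * S.Ts := fun f => by
    rw [U, mul_sub, mul_smul_comm, mul_one]
  rw [show S.iota h = S.emb (ν (S.dec h).1) + S.emb (ν (S.dec h).2) * S.U from rfl]
  rw [S.iota_add, S.iota_emb, ν_ν, hU (ν (S.dec h).2), S.iota_sub, S.iota_smul,
    S.iota_emb, ν_ν, S.iota_embTs, ν_ν, hU ((S.dec h).2)]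
  conv_rhs => rw [S.dec_spec h]
  module

lemma iota_one : S.iota 1 = 1 := by
  have : (1 : H) = S.emb 1 := (map_one S.emb).symm
  rw [this, S.iota_emb, map_one]

lemma iota_algebraMap (x : ℂ) : S.iota (algebraMap ℂ H x) = algebraMap ℂ H x := by
  rw [Algebra.algebraMap_eq_smul_one, S.iota_smul, S.iota_one]

end Aux
end RankOneAffineHecke

/-- In a rank-one affine Hecke algebra `H` with data `(Y, α, α∨, q₁, q₀)` and element
`T_s`, the `ℂ`-linear map `ι : H → H` determined on the `ℂ`-basis
`{θ_y, θ_y·T_s : y ∈ Y}` by `ι(θ_y) = θ_{−y}` and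
`ι(θ_y·T_s) = θ_{−y}·((q₁ − 1)·1 − T_s)` is an automorphism of `H` as a `ℂ`-algebra,
and `ι ∘ ι` is the identity. -/
theorem rankOneAffineHecke_involution
    {Y : Type*} [AddCommGroup Y] {H : Type*} [Ring H] [Algebra ℂ H]
    (S : RankOneAffineHecke Y H) :
    ∃ ι : H ≃ₐ[ℂ] H,
      (∀ y : Y, ι (S.θ y) = S.θ (-y)) ∧
      (∀ y : Y, ι (S.θ y * S.Ts) = S.θ (-y) * (((S.q1 : ℂ) - 1) • (1 : H) - S.Ts)) ∧
      (∀ h : H, ι (ι h) = h) := by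
  let E : H ≃ₐ[ℂ] H :=
    { toFun := S.iota, invFun := S.iota,
      left_inv := S.iota_iota, right_inv := S.iota_iota,
      map_mul' := S.iota_mul, map_add' := S.iota_add,
      commutes' := S.iota_algebraMap }
  refine ⟨E, ?_, ?_, fun h => S.iota_iota h⟩
  · intro y
    show S.iota (S.θ y) = S.θ (-y)
    rw [RankOneAffineHecke.θ, S.iota_emb, RankOneAffineHecke.ν_single]
    rfl
  · intro y
    show S.iota (S.θ y * S.Ts) = _
    rw [RankOneAffineHecke.θ, S.iota_embTs, RankOneAffineHecke.ν_single]
    rfl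

end
end

section
/- Let V be a finite-dimensional real normed vector space and let Ψ be a set of affine functions a : V → ℝ, each with nonzero linear part, such that for every bounded subset of V only finitely many a ∈ Ψ vanish at some point of that subset. Let J ⊆ Ψ be a finite subset whose linear parts are linearly independent, let E^J := {x ∈ V : a(x) = 0 for all a ∈ J}, and assume: (i) there exists x₀ ∈ E^J such that a(x₀) ≠ 0 for every a ∈ Ψ that does not vanish identically on E^J; (ii) every a ∈ Ψ that vanishes identically on E^J can be written as a = Σ_{b∈J} c_b·b with real coefficients c_b that are either all ≥ 0 or all ≤ 0. Then there exists a connected component C of V ∖ ⋃_{a∈Ψ} a⁻¹(0) such that C ⊆ {x ∈ V : b(x) > 0 for all b ∈ J} and, for every a ∈ J, the hyperplane H_a := a⁻¹(0) is a wall of C, meaning: there exist z ∈ H_a and an open neighborhood W of z in V with W ∩ C = W ∩ {x ∈ V : a(x) > 0}. -/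
/-!
Near `x₀` the cone `Q = {x | ∀ b ∈ J, 0 < b x}` meets no hyperplane of `Ψ`: a hyperplane through
`E^J` cannot cut `Q` because its equation is a same-sign combination of `J`, and the other
hyperplanes miss `x₀`, hence (by local finiteness) a whole ball around it.  So the convex set
`ball x₀ δ ∩ Q` lies in a single chamber `C`, which stays inside `Q` since the `b ∈ J` do not vanish
on it.  For `a ∈ J`, linear independence of `J` gives points `z` near `x₀` on `H_a` with the other
`b ∈ J` positive, and around such a `z` the chamber `C` coincides with the half-space `a > 0`.
-/

open Set Metric Filter Topology

theorem Finset.sum_mul_ne_zero_of_sameSign {ι : Type*} {s : Finset ι} {c f : ι → ℝ}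
    (hc : (∀ i ∈ s, 0 ≤ c i) ∨ ∀ i ∈ s, c i ≤ 0) (hc₀ : ∃ i ∈ s, c i ≠ 0)
    (hf : ∀ i ∈ s, 0 < f i) : ∑ i ∈ s, c i * f i ≠ 0 := by
  obtain ⟨i, hi, hci⟩ := hc₀
  rcases hc with hc | hc
  · exact (Finset.sum_pos' (fun j hj => mul_nonneg (hc j hj) (hf j hj).le)
      ⟨i, hi, mul_pos ((hc i hi).lt_of_ne' hci) (hf i hi)⟩).ne'
  · exact (Finset.sum_neg' (fun j hj => mul_nonpos_of_nonpos_of_nonneg (hc j hj) (hf j hj).le)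
      ⟨i, hi, mul_neg_of_neg_of_pos ((hc i hi).lt_of_ne hci) (hf i hi)⟩).ne

theorem LinearIndependent.surjective_pi {ι K V : Type*} [Finite ι] [Field K] [AddCommGroup V]
    [Module K V] {f : ι → Module.Dual K V} (hf : LinearIndependent K f) :
    Function.Surjective (LinearMap.pi f) := by
  classical
  have := Fintype.ofFinite ι
  rw [← LinearMap.dualMap_injective_iff, ← LinearMap.ker_eq_bot, LinearMap.ker_eq_bot']
  intro φ hφ
  have hsum : ∑ i, φ (Pi.single i 1) • f i = 0 := by
    ext x
    have hsingle (i : ι) : (fun j => if i = j then (1 : K) else 0) = Pi.single i 1 := by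
      ext j; simp [Pi.single_apply, eq_comm]
    have := LinearMap.congr_fun hφ x
    rw [LinearMap.dualMap_apply, LinearMap.pi_apply_eq_sum_univ] at this
    simpa [hsingle, mul_comm, eq_comm] using this
  have h0 := Fintype.linearIndependent_iff.mp hf _ hsum
  exact LinearMap.pi_ext' fun i => LinearMap.ext_ring (by simpa using h0 i)

theorem IsPreconnected.lt_of_forall_ne {X α : Type*} [TopologicalSpace X] [LinearOrder α]
    [TopologicalSpace α] [OrderClosedTopology α] {s : Set X} (hs : IsPreconnected s)
    {f : X → α} (hf : ContinuousOn f s) {c : α} (hne : ∀ x ∈ s, f x ≠ c) {y : X} (hy : y ∈ s)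
    (hfy : c < f y) {x : X} (hx : x ∈ s) : c < f x := by
  by_contra! hle
  obtain ⟨x', hx', hfx'⟩ := hs.intermediate_value hx hy hf ⟨hle, hfy.le⟩
  exact hne x' hx' hfx'

theorem eventually_nhds_forall_apply_ne_zero {X F : Type*} [PseudoMetricSpace X] [FunLike F X ℝ]
    {Ψ : Set F} (hcont : ∀ a ∈ Ψ, Continuous a)
    (hlf : ∀ s : Set X, Bornology.IsBounded s → {a ∈ Ψ | ∃ x ∈ s, a x = 0}.Finite) (x₀ : X) :
    ∀ᶠ x in 𝓝 x₀, ∀ a ∈ Ψ, a x₀ ≠ 0 → a x ≠ 0 := by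
  have hfin : {a ∈ {a ∈ Ψ | ∃ x ∈ ball x₀ 1, a x = 0} | a x₀ ≠ 0}.Finite :=
    (hlf _ isBounded_ball).subset (sep_subset _ _)
  have hnear : ∀ᶠ x in 𝓝 x₀, ∀ a ∈ {a ∈ {a ∈ Ψ | ∃ x ∈ ball x₀ 1, a x = 0} | a x₀ ≠ 0}, a x ≠ 0 :=
    (eventually_all_finite hfin).2 fun a ha => (hcont a ha.1.1).continuousAt.eventually_ne ha.2
  filter_upwards [hnear, ball_mem_nhds x₀ one_pos] with x hx hx₁ a ha hax₀ hax
  exact hx a ⟨⟨ha, x, hx₁, hax⟩, hax₀⟩ hax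

theorem exists_pos_add_smul_mem {E : Type*} [AddCommGroup E] [Module ℝ E] [TopologicalSpace E]
    [ContinuousAdd E] [ContinuousSMul ℝ E] {x₀ : E} {U : Set E} (hU : U ∈ 𝓝 x₀) (v : E) :
    ∃ t > (0 : ℝ), x₀ + t • v ∈ U := by
  have hlim : Tendsto (fun t : ℝ => x₀ + t • v) (𝓝[>] 0) (𝓝 x₀) :=
    ((show Continuous fun t : ℝ => x₀ + t • v by fun_prop).tendsto' 0 x₀ (by simp)).mono_left
      nhdsWithin_le_nhds
  obtain ⟨t, htU, ht⟩ := ((hlim.eventually_mem hU).and self_mem_nhdsWithin).exists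
  exact ⟨t, ht, htU⟩

section AffineFunctionals

variable {V : Type*}

theorem AffineMap.apply_ne_zero_of_eq_sum_sameSign [AddCommGroup V] [Module ℝ V] {ι : Type*}
    {s : Finset ι} {b : ι → V →ᵃ[ℝ] ℝ} {a : V →ᵃ[ℝ] ℝ} (ha : a.linear ≠ 0) {c : ι → ℝ}
    (hc : (∀ i ∈ s, 0 ≤ c i) ∨ ∀ i ∈ s, c i ≤ 0) (hab : ∀ x, a x = ∑ i ∈ s, c i * b i x)
    {x : V} (hx : ∀ i ∈ s, 0 < b i x) : a x ≠ 0 := by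
  have hc₀ : ∃ i ∈ s, c i ≠ 0 := by
    by_contra! hc₀
    refine ha (a.linear_eq_zero_iff_exists_const.2 ⟨0, AffineMap.ext fun y => ?_⟩)
    rw [hab y, Finset.sum_eq_zero fun i hi => by rw [hc₀ i hi, zero_mul]]
    rfl
  rw [hab x]
  exact Finset.sum_mul_ne_zero_of_sameSign hc hc₀ hx

theorem exists_mem_nhds_apply_eq_mul [AddCommGroup V] [Module ℝ V] [TopologicalSpace V]
    [ContinuousAdd V] [ContinuousSMul ℝ V] {ι : Type*} [Finite ι] {b : ι → V →ᵃ[ℝ] ℝ}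
    (hb : LinearIndependent ℝ fun i => (b i).linear) {x₀ : V} (hx₀ : ∀ i, b i x₀ = 0)
    {U : Set V} (hU : U ∈ 𝓝 x₀) (c : ι → ℝ) : ∃ t > (0 : ℝ), ∃ z ∈ U, ∀ i, b i z = t * c i := by
  obtain ⟨v, hv⟩ := hb.surjective_pi c
  obtain ⟨t, ht, htU⟩ := exists_pos_add_smul_mem hU v
  refine ⟨t, ht, _, htU, fun i => ?_⟩
  rw [add_comm, ← vadd_eq_add, AffineMap.map_vadd, hx₀, ← congrFun hv i]
  simp

theorem convex_setOf_forall_pos [AddCommGroup V] [Module ℝ V] (s : Finset (V →ᵃ[ℝ] ℝ)) :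
    Convex ℝ {x | ∀ b ∈ s, 0 < b x} := by
  simp only [ofPred_forall]
  exact convex_iInter₂ fun b _ => (convex_Ioi 0).affine_preimage b

variable [NormedAddCommGroup V] [NormedSpace ℝ V] [FiniteDimensional ℝ V]

theorem isOpen_setOf_forall_pos (s : Finset (V →ᵃ[ℝ] ℝ)) : IsOpen {x | ∀ b ∈ s, 0 < b x} := by
  simpa only [ofPred_forall] using
    isOpen_biInter_finset fun b _ => isOpen_lt continuous_const b.continuous_of_finiteDimensional

theorem connectedComponentIn_subset_setOf_forall_pos {J : Finset (V →ᵃ[ℝ] ℝ)} {Ω : Set V}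
    (hΩ : ∀ x ∈ Ω, ∀ b ∈ J, b x ≠ 0) {y : V} (hy : y ∈ Ω) (hyJ : ∀ b ∈ J, 0 < b y) :
    connectedComponentIn Ω y ⊆ {x | ∀ b ∈ J, 0 < b x} := fun _ hx b hb =>
  isPreconnected_connectedComponentIn.lt_of_forall_ne b.continuous_of_finiteDimensional.continuousOn
    (fun x' hx' => hΩ x' (connectedComponentIn_subset _ _ hx') b hb)
    (mem_connectedComponentIn hy) (hyJ b hb) hx

theorem eventually_nhds_forall_pos_imp_forall_ne_zero {Ψ : Set (V →ᵃ[ℝ] ℝ)}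
    (hlin : ∀ a ∈ Ψ, a.linear ≠ 0)
    (hlf : ∀ s : Set V, Bornology.IsBounded s → {a ∈ Ψ | ∃ x ∈ s, a x = 0}.Finite)
    {J : Finset (V →ᵃ[ℝ] ℝ)} {x₀ : V}
    (hx₀gen : ∀ a ∈ Ψ, (¬ ∀ x : V, (∀ b ∈ J, b x = 0) → a x = 0) → a x₀ ≠ 0)
    (hcomb : ∀ a ∈ Ψ, (∀ x : V, (∀ b ∈ J, b x = 0) → a x = 0) →
      ∃ cf : {x // x ∈ J} → ℝ, ((∀ b, 0 ≤ cf b) ∨ (∀ b, cf b ≤ 0)) ∧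
        ∀ x : V, a x = ∑ b ∈ J.attach, cf b * (b : V →ᵃ[ℝ] ℝ) x) :
    ∀ᶠ x in 𝓝 x₀, (∀ b ∈ J, 0 < b x) → ∀ a ∈ Ψ, a x ≠ 0 := by
  filter_upwards [eventually_nhds_forall_apply_ne_zero
    (fun a _ => a.continuous_of_finiteDimensional) hlf x₀] with x hx hxJ a ha
  by_cases hvan : ∀ y, (∀ b ∈ J, b y = 0) → a y = 0
  · obtain ⟨c, hc, hac⟩ := hcomb a ha hvan
    exact AffineMap.apply_ne_zero_of_eq_sum_sameSign (hlin a ha)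
      (hc.imp (fun h i _ => h i) (fun h i _ => h i)) hac fun b _ => hxJ b b.2
  · exact hx a ha (hx₀gen a ha hvan)

theorem exists_isOpen_inter_eq_inter_halfspace [DecidableEq (V →ᵃ[ℝ] ℝ)]
    {J : Finset (V →ᵃ[ℝ] ℝ)} {C U : Set V} (hU : IsOpen U) (hUC : U ∩ {x | ∀ b ∈ J, 0 < b x} ⊆ C)
    (hCJ : C ⊆ {x | ∀ b ∈ J, 0 < b x}) {a : V →ᵃ[ℝ] ℝ} (ha : a ∈ J) {z : V} (hzU : z ∈ U)
    (hz : ∀ b ∈ J.erase a, 0 < b z) :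
    ∃ W : Set V, IsOpen W ∧ z ∈ W ∧ W ∩ C = W ∩ {x | 0 < a x} := by
  refine ⟨U ∩ {x | ∀ b ∈ J.erase a, 0 < b x}, hU.inter (isOpen_setOf_forall_pos _), ⟨hzU, hz⟩, ?_⟩
  have hcone : {x | ∀ b ∈ J.erase a, 0 < b x} ∩ {x | 0 < a x} = {x | ∀ b ∈ J, 0 < b x} := by
    ext x
    simp only [mem_inter_iff, mem_ofPred_eq, Finset.mem_erase]
    refine ⟨fun ⟨hx, hxa⟩ b hb => ?_, fun hx => ⟨fun b hb => hx b hb.2, hx a ha⟩⟩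
    by_cases hba : b = a
    · exact hba ▸ hxa
    · exact hx b ⟨hba, hb⟩
  refine Subset.antisymm (fun x ⟨hxW, hxC⟩ => ⟨hxW, hCJ hxC a ha⟩) ?_
  rintro x ⟨⟨hxU, hx⟩, hxa⟩
  exact ⟨⟨hxU, hx⟩, hUC ⟨hxU, hcone ▸ ⟨hx, hxa⟩⟩⟩

end AffineFunctionals

/-- Let `V` be a finite-dimensional real normed vector space and `Ψ` a set of affine
functions `V → ℝ`, each with nonzero linear part, such that on every bounded set only
finitely many members of `Ψ` have a zero.  Let `J ⊆ Ψ` be a finite subset whose linear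
parts are linearly independent, and set `E^J := {x : ∀ a ∈ J, a x = 0}`.  Assume:
(i) there is `x₀ ∈ E^J` at which every `a ∈ Ψ` not vanishing identically on `E^J` is
nonzero; (ii) every `a ∈ Ψ` vanishing identically on `E^J` is a linear combination of
`J` with coefficients all `≥ 0` or all `≤ 0`.  Then some connected component `C` of
`V ∖ ⋃_{a∈Ψ} a⁻¹(0)` is contained in `{x : ∀ b ∈ J, b x > 0}` and has every
`H_a = a⁻¹(0)`, `a ∈ J`, as a wall: there are `z ∈ H_a` and an open neighborhood `W`
of `z` with `W ∩ C = W ∩ {x : a x > 0}`. -/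
theorem exists_chamber_with_prescribed_walls
    {V : Type*} [NormedAddCommGroup V] [NormedSpace ℝ V] [FiniteDimensional ℝ V]
    (Ψ : Set (V →ᵃ[ℝ] ℝ))
    (hlin : ∀ a ∈ Ψ, a.linear ≠ 0)
    (hlf : ∀ s : Set V, Bornology.IsBounded s → {a ∈ Ψ | ∃ x ∈ s, a x = 0}.Finite)
    (J : Finset (V →ᵃ[ℝ] ℝ)) (hJΨ : ↑J ⊆ Ψ)
    (hJindep : LinearIndependent ℝ (fun b : {x // x ∈ J} => ((b : V →ᵃ[ℝ] ℝ)).linear))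
    (x₀ : V) (hx₀ : ∀ a ∈ J, a x₀ = 0)
    (hx₀gen : ∀ a ∈ Ψ, (¬ ∀ x : V, (∀ b ∈ J, b x = 0) → a x = 0) → a x₀ ≠ 0)
    (hcomb : ∀ a ∈ Ψ, (∀ x : V, (∀ b ∈ J, b x = 0) → a x = 0) →
      ∃ cf : {x // x ∈ J} → ℝ, ((∀ b, 0 ≤ cf b) ∨ (∀ b, cf b ≤ 0)) ∧
        ∀ x : V, a x = ∑ b ∈ J.attach, cf b * (b : V →ᵃ[ℝ] ℝ) x) :
    ∃ C : Set V,
      (∃ y ∈ {x : V | ∀ a ∈ Ψ, a x ≠ 0},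
          C = connectedComponentIn {x : V | ∀ a ∈ Ψ, a x ≠ 0} y) ∧
      C ⊆ {x : V | ∀ b ∈ J, 0 < b x} ∧
      ∀ a ∈ J, ∃ z : V, a z = 0 ∧ ∃ W : Set V, IsOpen W ∧ z ∈ W ∧
        W ∩ C = W ∩ {x : V | 0 < a x} := by
  classical
  obtain ⟨δ, hδ, hPΩ⟩ := eventually_nhds_iff_ball.1
    (eventually_nhds_forall_pos_imp_forall_ne_zero hlin hlf hx₀gen hcomb)
  have hx₀J : ∀ b : J, (b : V →ᵃ[ℝ] ℝ) x₀ = 0 := fun b => hx₀ b b.2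
  obtain ⟨t, ht, y, hyB, hy⟩ :=
    exists_mem_nhds_apply_eq_mul hJindep hx₀J (ball_mem_nhds x₀ hδ) 1
  have hyJ : ∀ b ∈ J, 0 < b y := fun b hb => by simpa [hy ⟨b, hb⟩] using ht
  have hyΩ : ∀ a ∈ Ψ, a y ≠ 0 := hPΩ y hyB hyJ
  have hPC : ball x₀ δ ∩ {x | ∀ b ∈ J, 0 < b x} ⊆ connectedComponentIn {x | ∀ a ∈ Ψ, a x ≠ 0} y :=
    IsPreconnected.subset_connectedComponentIn
      ((convex_ball x₀ δ).inter (convex_setOf_forall_pos J)).isPreconnected ⟨hyB, hyJ⟩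
      fun x hx => hPΩ x hx.1 hx.2
  have hCJ := connectedComponentIn_subset_setOf_forall_pos
    (fun x (hx : ∀ a ∈ Ψ, a x ≠ 0) b hb => hx b (hJΨ hb)) hyΩ hyJ
  refine ⟨_, ⟨y, hyΩ, rfl⟩, hCJ, fun a ha => ?_⟩
  obtain ⟨s, hs, z, hzB, hz⟩ := exists_mem_nhds_apply_eq_mul hJindep hx₀J (ball_mem_nhds x₀ hδ)
    fun b => if (b : V →ᵃ[ℝ] ℝ) = a then 0 else 1
  refine ⟨z, by simpa using hz ⟨a, ha⟩,
    exists_isOpen_inter_eq_inter_halfspace isOpen_ball hPC hCJ ha hzB fun b hb => ?_⟩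
  simpa [hz ⟨b, Finset.mem_of_mem_erase hb⟩, Finset.ne_of_mem_erase hb] using hs
end

section
/- Let G be a group and let U, V, M be subgroups of G such that M normalizes both U and V, the multiplication map U × V × M → G, (u, v, m) ↦ u·v·m, is injective, and every element of G that commutes with every element of M belongs to M. Let K be a subgroup of G such that K = (K∩U)·(K∩V)·(K∩M). If s ∈ G normalizes M and s ∈ M·U·K, then s ∈ M. -/
/-!
Write `s = m · (u v) · m'` with `m, m' ∈ M`, `u ∈ U`, `v ∈ V`, using the decomposition of `K`.
Then `x = u v` normalizes `M`. For `n ∈ M` put `n' = x n x⁻¹ ∈ M`; since `M` normalizes `U` and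
`V`, the identity `u v n = (n' u n'⁻¹)(n' v n'⁻¹) n'` compares two `U · V · M` decompositions, so
`n' = n`. Hence `x` centralizes `M`, so `x ∈ M` and `s ∈ M`.
-/

namespace Subgroup

variable {G : Type*} [Group G] {U V M : Subgroup G}

theorem eq_of_mul_mul_eq_mul_mul
    (hinj : Function.Injective
      (fun p : U × V × M => ((p.1 : G) * (p.2.1 : G) * (p.2.2 : G))))
    {u₁ v₁ m₁ u₂ v₂ m₂ : G} (hu₁ : u₁ ∈ U) (hv₁ : v₁ ∈ V) (hm₁ : m₁ ∈ M)
    (hu₂ : u₂ ∈ U) (hv₂ : v₂ ∈ V) (hm₂ : m₂ ∈ M) (h : u₁ * v₁ * m₁ = u₂ * v₂ * m₂) :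
    m₁ = m₂ :=
  congrArg (fun p : U × V × M => (p.2.2 : G))
    (hinj (a₁ := (⟨u₁, hu₁⟩, ⟨v₁, hv₁⟩, ⟨m₁, hm₁⟩)) (a₂ := (⟨u₂, hu₂⟩, ⟨v₂, hv₂⟩, ⟨m₂, hm₂⟩)) h)

theorem conj_eq_of_conj_mem
    (hUM : ∀ m ∈ M, ∀ u ∈ U, m * u * m⁻¹ ∈ U) (hVM : ∀ m ∈ M, ∀ v ∈ V, m * v * m⁻¹ ∈ V)
    (hinj : Function.Injective
      (fun p : U × V × M => ((p.1 : G) * (p.2.1 : G) * (p.2.2 : G))))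
    {u v m : G} (hu : u ∈ U) (hv : v ∈ V) (hm : m ∈ M) (hconj : u * v * m * (u * v)⁻¹ ∈ M) :
    u * v * m * (u * v)⁻¹ = m := by
  set n := u * v * m * (u * v)⁻¹ with hn
  have hdecomp : u * v * m = (n * u * n⁻¹) * (n * v * n⁻¹) * n := by rw [hn]; group
  exact (eq_of_mul_mul_eq_mul_mul hinj hu hv hm (hUM n hconj u hu) (hVM n hconj v hv) hconj
    hdecomp).symm

theorem mul_mem_centralizer_of_mul_mem_normalizer
    (hUM : ∀ m ∈ M, ∀ u ∈ U, m * u * m⁻¹ ∈ U) (hVM : ∀ m ∈ M, ∀ v ∈ V, m * v * m⁻¹ ∈ V)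
    (hinj : Function.Injective
      (fun p : U × V × M => ((p.1 : G) * (p.2.1 : G) * (p.2.2 : G))))
    {u v : G} (hu : u ∈ U) (hv : v ∈ V) (hnorm : u * v ∈ normalizer (M : Set G)) :
    u * v ∈ centralizer (M : Set G) :=
  mem_centralizer_iff.2 fun m hm =>
    (mul_inv_eq_iff_eq_mul.1
      (conj_eq_of_conj_mem hUM hVM hinj hu hv hm ((mem_normalizer_iff.1 hnorm m).1 hm))).symm

end Subgroup

/-- Let `G` be a group with subgroups `U`, `V`, `M` such that `M` normalizes `U` and
`V`, the multiplication map `U × V × M → G` is injective, and every element of `G`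
commuting with all of `M` lies in `M`.  Let `K` be a subgroup with
`K = (K∩U)·(K∩V)·(K∩M)`.  If `s ∈ G` normalizes `M` and `s ∈ M·U·K`, then `s ∈ M`. -/
theorem mem_levi_of_normalizes_and_mem_MUK
    {G : Type*} [Group G] (U V M : Subgroup G)
    (hUM : ∀ m ∈ M, ∀ u ∈ U, m * u * m⁻¹ ∈ U)
    (hVM : ∀ m ∈ M, ∀ v ∈ V, m * v * m⁻¹ ∈ V)
    (hinj : Function.Injective
      (fun p : U × V × M => ((p.1 : G) * (p.2.1 : G) * (p.2.2 : G))))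
    (hcent : ∀ g : G, (∀ m ∈ M, g * m = m * g) → g ∈ M)
    (K : Subgroup G)
    (hK : ∀ k ∈ K, ∃ u ∈ U ⊓ K, ∃ v ∈ V ⊓ K, ∃ m ∈ M ⊓ K, k = u * v * m)
    (s : G) (hsM : ∀ g : G, g ∈ M ↔ s * g * s⁻¹ ∈ M)
    (hs : ∃ m ∈ M, ∃ u ∈ U, ∃ k ∈ K, s = m * u * k) :
    s ∈ M := by
  obtain ⟨m, hm, u, hu, k, hk, rfl⟩ := hs
  obtain ⟨u', hu', v, hv, m', hm', rfl⟩ := hK k hk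
  have hsplit : m * u * (u' * v * m') = m * (u * u' * v) * m' := by group
  have hnorm : u * u' * v ∈ Subgroup.normalizer (M : Set G) := by
    have hx : u * u' * v = m⁻¹ * (m * u * (u' * v * m')) * m'⁻¹ := by group
    rw [hx]
    exact mul_mem
      (mul_mem (inv_mem (Subgroup.le_normalizer hm)) (Subgroup.mem_normalizer_iff.2 hsM))
      (inv_mem (Subgroup.le_normalizer hm'.1))
  have hcentralizer := Subgroup.mul_mem_centralizer_of_mul_mem_normalizer hUM hVM hinj
    (mul_mem hu hu'.1) hv.1 hnorm
  have hxM : u * u' * v ∈ M :=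
    hcent _ fun n hn => (Subgroup.mem_centralizer_iff.1 hcentralizer n hn).symm
  rw [hsplit]
  exact mul_mem (mul_mem hm hxM) hm'.1
end

section
/- Let G be a group and let U, V, M be subgroups of G such that M normalizes both U and V and the multiplication map V × M × U → G, (v, m, u) ↦ v·m·u, is injective. Let K be a subgroup of G with K = (K∩V)·(K∩M)·(K∩U), and let s ∈ G satisfy s·M·s⁻¹ = M, s·(K∩M)·s⁻¹ = K∩M, and K = (K ∩ s⁻¹Vs)·(K∩M)·(K ∩ s⁻¹Us). Suppose m ∈ M, u ∈ U, and k, k′ ∈ K satisfy u·m·s = k⁻¹·s·k′. Then m ∈ K∩M. Moreover, writing k = k_V·k_M·k_U with k_V ∈ K∩V, k_M ∈ K∩M, k_U ∈ K∩U, and k′ = k′_V·k′_M·k′_U with k′_V ∈ K ∩ s⁻¹Vs, k′_M ∈ K∩M, k′_U ∈ K ∩ s⁻¹Us, one has k_M·m = s·k′_M·s⁻¹. -/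
/-!
Writing `k = k_V k_M k_U` and `k' = k'_V k'_M k'_U`, the relation `k (u m s) = s k'` becomes
`k_V · (k_M m) · (m⁻¹ k_U u m) = (s k'_V s⁻¹) · (s k'_M s⁻¹) · (s k'_U s⁻¹)`,
two factorizations of one element in `V · M · U`. Uniqueness of such factorizations gives
`k_M m = s k'_M s⁻¹`, which lies in `K ∩ M`; hence so does `m`.
-/

section

variable {G : Type*} [Group G] {U V M : Subgroup G}

theorem middle_eq_of_mul_mul_eq
    (hinj : Function.Injective (fun p : V × M × U => (p.1 : G) * (p.2.1 : G) * (p.2.2 : G)))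
    {v v' m m' u u' : G} (hv : v ∈ V) (hv' : v' ∈ V) (hm : m ∈ M) (hm' : m' ∈ M)
    (hu : u ∈ U) (hu' : u' ∈ U) (h : v * m * u = v' * m' * u') : m = m' := by
  have := @hinj (⟨v, hv⟩, ⟨m, hm⟩, ⟨u, hu⟩) (⟨v', hv'⟩, ⟨m', hm'⟩, ⟨u', hu'⟩) h
  simpa using congrArg (fun p : V × M × U => (p.2.1 : G)) this

theorem mul_eq_conj_of_mul_mul_eq
    (hUM : ∀ m ∈ M, ∀ u ∈ U, m * u * m⁻¹ ∈ U)
    (hinj : Function.Injective (fun p : V × M × U => (p.1 : G) * (p.2.1 : G) * (p.2.2 : G)))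
    {s m u kV kM kU k'V k'M k'U : G} (hm : m ∈ M) (hu : u ∈ U)
    (hkV : kV ∈ V) (hkM : kM ∈ M) (hkU : kU ∈ U)
    (hk'V : s * k'V * s⁻¹ ∈ V) (hk'M : s * k'M * s⁻¹ ∈ M) (hk'U : s * k'U * s⁻¹ ∈ U)
    (heq : u * m * s = (kV * kM * kU)⁻¹ * s * (k'V * k'M * k'U)) :
    kM * m = s * k'M * s⁻¹ := by
  have hconj : m⁻¹ * (kU * u) * m ∈ U := by
    simpa using hUM m⁻¹ (inv_mem hm) (kU * u) (mul_mem hkU hu)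
  refine middle_eq_of_mul_mul_eq hinj hkV hk'V (mul_mem hkM hm) hk'M hconj hk'U ?_
  calc kV * (kM * m) * (m⁻¹ * (kU * u) * m)
      = (kV * kM * kU) * (u * m * s) * s⁻¹ := by group
    _ = s * (k'V * k'M * k'U) * s⁻¹ := by rw [heq]; group
    _ = (s * k'V * s⁻¹) * (s * k'M * s⁻¹) * (s * k'U * s⁻¹) := by group

end

theorem levi_component_of_double_coset_general
    {G : Type*} [Group G] (U V M K : Subgroup G)
    (hUM : ∀ m ∈ M, ∀ u ∈ U, m * u * m⁻¹ ∈ U)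
    (hinj : Function.Injective
      (fun p : V × M × U => ((p.1 : G) * (p.2.1 : G) * (p.2.2 : G))))
    (hKdec : ∀ k ∈ K, ∃ v ∈ V ⊓ K, ∃ m ∈ M ⊓ K, ∃ u ∈ U ⊓ K, k = v * m * u)
    (s : G)
    (hsKM : ∀ g : G, g ∈ K ⊓ M ↔ s * g * s⁻¹ ∈ K ⊓ M)
    (hKdec' : ∀ k ∈ K, ∃ v' : G, v' ∈ K ∧ s * v' * s⁻¹ ∈ V ∧
      ∃ m' ∈ K ⊓ M, ∃ u' : G, u' ∈ K ∧ s * u' * s⁻¹ ∈ U ∧ k = v' * m' * u')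
    (m u k k' : G) (hm : m ∈ M) (hu : u ∈ U) (hk : k ∈ K) (hk' : k' ∈ K)
    (heq : u * m * s = k⁻¹ * s * k') :
    m ∈ K ⊓ M ∧
    ∀ kV kM kU k'V k'M k'U : G,
      kV ∈ V ⊓ K → kM ∈ M ⊓ K → kU ∈ U ⊓ K → k = kV * kM * kU →
      k'V ∈ K → s * k'V * s⁻¹ ∈ V → k'M ∈ K ⊓ M →
      k'U ∈ K → s * k'U * s⁻¹ ∈ U → k' = k'V * k'M * k'U →
      kM * m = s * k'M * s⁻¹ := by
  constructor
  · obtain ⟨kV, hkV, kM, hkM, kU, hkU, rfl⟩ := hKdec k hk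
    obtain ⟨k'V, -, hk'V, k'M, hk'M, k'U, -, hk'U, rfl⟩ := hKdec' k' hk'
    have hsk'M := (hsKM k'M).mp hk'M
    rw [eq_inv_mul_of_mul_eq <|
      mul_eq_conj_of_mul_mul_eq hUM hinj hm hu hkV.1 hkM.1 hkU.1 hk'V hsk'M.2 hk'U heq]
    exact mul_mem (inv_mem ⟨hkM.2, hkM.1⟩) hsk'M
  · rintro kV kM kU k'V k'M k'U hkV hkM hkU rfl - hk'V hk'M - hk'U rfl
    exact mul_eq_conj_of_mul_mul_eq hUM hinj hm hu hkV.1 hkM.1 hkU.1 hk'V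
      ((hsKM k'M).mp hk'M).2 hk'U heq

/-- Let `G` be a group with subgroups `U`, `V`, `M`, `K` such that `M` normalizes `U`
and `V` and the multiplication map `V × M × U → G` is injective.  Assume
`K = (K∩V)·(K∩M)·(K∩U)`, and let `s ∈ G` satisfy `sMs⁻¹ = M`, `s(K∩M)s⁻¹ = K∩M` and
`K = (K ∩ s⁻¹Vs)·(K∩M)·(K ∩ s⁻¹Us)`.  If `m ∈ M`, `u ∈ U` and `k, k′ ∈ K` satisfy
`u·m·s = k⁻¹·s·k′`, then `m ∈ K∩M`; moreover, for any Iwahori factorizations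
`k = k_V·k_M·k_U` and `k′ = k′_V·k′_M·k′_U` as above, one has
`k_M·m = s·k′_M·s⁻¹`. -/
theorem levi_component_of_double_coset
    {G : Type*} [Group G] (U V M K : Subgroup G)
    (hUM : ∀ m ∈ M, ∀ u ∈ U, m * u * m⁻¹ ∈ U)
    (hVM : ∀ m ∈ M, ∀ v ∈ V, m * v * m⁻¹ ∈ V)
    (hinj : Function.Injective
      (fun p : V × M × U => ((p.1 : G) * (p.2.1 : G) * (p.2.2 : G))))
    (hKdec : ∀ k ∈ K, ∃ v ∈ V ⊓ K, ∃ m ∈ M ⊓ K, ∃ u ∈ U ⊓ K, k = v * m * u)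
    (s : G)
    (hsM : ∀ g : G, g ∈ M ↔ s * g * s⁻¹ ∈ M)
    (hsKM : ∀ g : G, g ∈ K ⊓ M ↔ s * g * s⁻¹ ∈ K ⊓ M)
    (hKdec' : ∀ k ∈ K, ∃ v' : G, v' ∈ K ∧ s * v' * s⁻¹ ∈ V ∧
      ∃ m' ∈ K ⊓ M, ∃ u' : G, u' ∈ K ∧ s * u' * s⁻¹ ∈ U ∧ k = v' * m' * u')
    (m u k k' : G) (hm : m ∈ M) (hu : u ∈ U) (hk : k ∈ K) (hk' : k' ∈ K)
    (heq : u * m * s = k⁻¹ * s * k') :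
    m ∈ K ⊓ M ∧
    ∀ kV kM kU k'V k'M k'U : G,
      kV ∈ V ⊓ K → kM ∈ M ⊓ K → kU ∈ U ⊓ K → k = kV * kM * kU →
      k'V ∈ K → s * k'V * s⁻¹ ∈ V → k'M ∈ K ⊓ M →
      k'U ∈ K → s * k'U * s⁻¹ ∈ U → k' = k'V * k'M * k'U →
      kM * m = s * k'M * s⁻¹ :=
  levi_component_of_double_coset_general U V M K hUM hinj hKdec s hsKM hKdec' m u k k' hm hu hk hk'
    heq
end
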